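/- arXiv:1711.09028 — 9 statements merged into one kernel-verified Lean document; each statement's English description precedes it below -/
import Mathlib

section
/- Let M be a finite matroid on ground set E. For elements w1,z1,w2,z2 of a commutative ring R define T(M; w1,z1,w2,z2) = Σ_{B⊆E(M)} w1^{rk(B)} · z1^{|B|−rk(B)} · w2^{rk(M)−rk(B)} · z2^{|E(M)∖B|−rk(M)+rk(B)}. Then for any elements u0,v0,u1,v1,u2,v2 of R one has the universal convolution formula: T(M; −u0,−v0,u2,v2) = Σ_{A⊆E} T(M|A; −u0,−v0,u1,v1) · T(M/A; −u1,−v1,u2,v2). -/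
open Finset

/-- A finite "pre-matroid": a finite ground set together with a rank function. -/
structure PreMatroid (α : Type*) where
  E : Finset α
  rk : Finset α → ℕ

namespace PreMatroid

variable {α : Type*} [DecidableEq α] {R : Type*} [CommRing R]

/-- The matroid axioms: `rk X ≤ |X|`, monotonicity, and submodularity
(all on subsets of the ground set). -/
def IsMatroid (M : PreMatroid α) : Prop :=
  (∀ X, X ⊆ M.E → M.rk X ≤ X.card) ∧
  (∀ X Y, X ⊆ Y → Y ⊆ M.E → M.rk X ≤ M.rk Y) ∧
  (∀ X Y, X ⊆ M.E → Y ⊆ M.E → M.rk (X ∪ Y) + M.rk (X ∩ Y) ≤ M.rk X + M.rk Y)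

/-- The restriction `M|A`: ground set `A`, rank function the restriction of `rk`. -/
def restrict (M : PreMatroid α) (A : Finset α) : PreMatroid α :=
  ⟨A, M.rk⟩

/-- The contraction `M/A`: ground set `E ∖ A`, rank function `B ↦ rk (B ∪ A) − rk A`. -/
def contract (M : PreMatroid α) (A : Finset α) : PreMatroid α :=
  ⟨M.E \ A, fun B => M.rk (B ∪ A) - M.rk A⟩

/-- The deletion `M∖A ≔ M|(E∖A)`. -/
def delete (M : PreMatroid α) (A : Finset α) : PreMatroid α :=
  M.restrict (M.E \ A)

/-- The rank `rk(M) = rk(E(M))` of a matroid. -/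
def rank (M : PreMatroid α) : ℕ := M.rk M.E

/-- The Tutte polynomial `𝔗_M(x,y) = Σ_{A ⊆ E} (x−1)^{rk(M)−rk(A)} (y−1)^{|A|−rk(A)}`,
evaluated at elements of a commutative ring. -/
def tutte (M : PreMatroid α) (x y : R) : R :=
  ∑ A ∈ M.E.powerset, (x - 1) ^ (M.rank - M.rk A) * (y - 1) ^ (A.card - M.rk A)

end PreMatroid

namespace PreMatroid

variable {α : Type*} [DecidableEq α] {R : Type*} [CommRing R]

/-- The four-variable invariant
`T(M; w1,z1,w2,z2) = Σ_{B⊆E} w1^{rk B} z1^{|B|−rk B} w2^{rk M − rk B} z2^{|E∖B|−rk M+rk B}`. -/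
def Tfour (M : PreMatroid α) (w1 z1 w2 z2 : R) : R :=
  ∑ B ∈ M.E.powerset,
    w1 ^ M.rk B * z1 ^ (B.card - M.rk B) * w2 ^ (M.rank - M.rk B) *
      z2 ^ ((M.E \ B).card - (M.rank - M.rk B))

/-! ### Auxiliary lemmas -/

lemma aux_rk_ext {M : PreMatroid α} (hM : M.IsMatroid) {X Y : Finset α} (hXY : X ⊆ Y)
    (hY : Y ⊆ M.E) : M.rk Y ≤ M.rk X + (Y.card - X.card) := by
  have h1 : X ∪ (Y \ X) = Y := Finset.union_sdiff_of_subset hXY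
  have h2 := hM.2.2 X (Y \ X) (hXY.trans hY) ((Finset.sdiff_subset).trans hY)
  have h3 := hM.1 (Y \ X) ((Finset.sdiff_subset).trans hY)
  rw [h1] at h2
  rw [Finset.card_sdiff_of_subset hXY] at h3
  omega

lemma aux_neg_one_sum (X : Finset α) :
    (∑ A ∈ X.powerset, (-1 : R) ^ A.card) = if X = ∅ then 1 else 0 := by
  have h := Finset.sum_powerset_neg_one_pow_card (x := X)
  have h2 : ((∑ A ∈ X.powerset, (-1 : ℤ) ^ A.card : ℤ) : R)
      = ∑ A ∈ X.powerset, (-1 : R) ^ A.card := by push_cast; rfl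
  rw [← h2, h]
  split <;> simp

/-- The building block: contribution of a chain `B ⊆ A ⊆ F ⊆ E`. -/
def auxT (M : PreMatroid α) (u0 v0 u1 v1 u2 v2 : R) (B A F : Finset α) : R :=
  ((-u0) ^ M.rk B * (-v0) ^ (B.card - M.rk B)) *
  (u1 ^ (M.rk A - M.rk B) * v1 ^ ((A.card - M.rk A) - (B.card - M.rk B))) *
  ((-u1) ^ (M.rk F - M.rk A) * (-v1) ^ ((F.card - M.rk F) - (A.card - M.rk A))) *
  (u2 ^ (M.rk M.E - M.rk F) * v2 ^ ((M.E.card - M.rk M.E) - (F.card - M.rk F)))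

/-- Key telescoping lemma: the sum over the middle set of a chain collapses. -/
lemma aux_key {M : PreMatroid α} (hM : M.IsMatroid) (u1 v1 : R) {B F : Finset α}
    (hBF : B ⊆ F) (hF : F ⊆ M.E) :
    (∑ A ∈ F.powerset.filter (fun A => B ⊆ A),
      u1 ^ (M.rk A - M.rk B) * v1 ^ ((A.card - M.rk A) - (B.card - M.rk B)) *
      ((-u1) ^ (M.rk F - M.rk A) * (-v1) ^ ((F.card - M.rk F) - (A.card - M.rk A))))
      = if F = B then 1 else 0 := by
  have hstep : ∀ A ∈ F.powerset.filter (fun A => B ⊆ A),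
      u1 ^ (M.rk A - M.rk B) * v1 ^ ((A.card - M.rk A) - (B.card - M.rk B)) *
      ((-u1) ^ (M.rk F - M.rk A) * (-v1) ^ ((F.card - M.rk F) - (A.card - M.rk A)))
      = (-1 : R) ^ ((F \ A).card) *
        (u1 ^ (M.rk F - M.rk B) * v1 ^ ((F.card - M.rk F) - (B.card - M.rk B))) := by
    intro A hA
    rw [Finset.mem_filter, Finset.mem_powerset] at hA
    obtain ⟨hAF, hBA⟩ := hA
    have h1 : M.rk B ≤ M.rk A := hM.2.1 B A hBA (hAF.trans hF)
    have h2 : M.rk A ≤ M.rk F := hM.2.1 A F hAF hF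
    have h3 : M.rk A ≤ M.rk B + (A.card - B.card) := aux_rk_ext hM hBA (hAF.trans hF)
    have h4 : M.rk F ≤ M.rk A + (F.card - A.card) := aux_rk_ext hM hAF hF
    have h5 : M.rk B ≤ B.card := hM.1 B ((hBA.trans hAF).trans hF)
    have h6 : M.rk A ≤ A.card := hM.1 A (hAF.trans hF)
    have h7 : B.card ≤ A.card := Finset.card_le_card hBA
    have h8 : A.card ≤ F.card := Finset.card_le_card hAF
    have hcard : (F \ A).card = F.card - A.card := Finset.card_sdiff_of_subset hAF
    have e1 : (M.rk F - M.rk B) = (M.rk A - M.rk B) + (M.rk F - M.rk A) := by omega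
    have e2 : (F.card - M.rk F) - (B.card - M.rk B)
        = ((A.card - M.rk A) - (B.card - M.rk B)) + ((F.card - M.rk F) - (A.card - M.rk A)) := by
      omega
    have e3 : F.card - A.card
        = (M.rk F - M.rk A) + ((F.card - M.rk F) - (A.card - M.rk A)) := by omega
    rw [hcard, e1, e2, e3, pow_add, pow_add, pow_add, neg_pow u1, neg_pow v1]
    ring
  rw [Finset.sum_congr rfl hstep, ← Finset.sum_mul]
  have hbij : ∑ A ∈ F.powerset.filter (fun A => B ⊆ A), (-1 : R) ^ ((F \ A).card)
      = ∑ A' ∈ (F \ B).powerset, (-1 : R) ^ A'.card := by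
    refine Finset.sum_nbij' (fun A => F \ A) (fun A' => F \ A') ?_ ?_ ?_ ?_ ?_
    · intro A hA
      rw [Finset.mem_filter, Finset.mem_powerset] at hA
      exact Finset.mem_powerset.2 (Finset.sdiff_subset_sdiff (le_refl F) hA.2)
    · intro A' hA'
      rw [Finset.mem_powerset] at hA'
      rw [Finset.mem_filter, Finset.mem_powerset]
      refine ⟨Finset.sdiff_subset, Finset.subset_sdiff.2 ⟨hBF, ?_⟩⟩
      exact (Finset.disjoint_of_subset_left hA' Finset.sdiff_disjoint).symm
    · intro A hA
      rw [Finset.mem_filter, Finset.mem_powerset] at hA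
      exact Finset.sdiff_sdiff_eq_self hA.1
    · intro A' hA'
      rw [Finset.mem_powerset] at hA'
      exact Finset.sdiff_sdiff_eq_self (hA'.trans Finset.sdiff_subset)
    · intro A hA; rfl
  rw [hbij, aux_neg_one_sum]
  by_cases h : F = B
  · subst h
    simp
  · have hne : ¬ (F \ B = ∅) := by
      intro he
      exact h (Finset.Subset.antisymm ((Finset.sdiff_eq_empty_iff_subset).1 he) hBF)
    rw [if_neg hne, if_neg h, zero_mul]

/-- Expansion of the product of the two `Tfour`s as a chain sum. -/
lemma aux_expand {M : PreMatroid α} (hM : M.IsMatroid) (u0 v0 u1 v1 u2 v2 : R)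
    {A : Finset α} (hA : A ⊆ M.E) :
    (M.restrict A).Tfour (-u0) (-v0) u1 v1 * (M.contract A).Tfour (-u1) (-v1) u2 v2
    = ∑ B ∈ A.powerset, ∑ F ∈ M.E.powerset.filter (fun F => A ⊆ F),
        auxT M u0 v0 u1 v1 u2 v2 B A F := by
  have hground : (M.E \ A) ∪ A = M.E := Finset.sdiff_union_of_subset hA
  rw [Tfour, Tfour, Finset.sum_mul_sum]
  simp only [restrict, contract, rank, hground]
  refine Finset.sum_congr rfl fun B hB => ?_
  rw [Finset.mem_powerset] at hB
  refine Finset.sum_nbij' (fun C => A ∪ C) (fun F => F \ A) ?_ ?_ ?_ ?_ ?_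
  · intro C hC
    rw [Finset.mem_powerset] at hC
    rw [Finset.mem_filter, Finset.mem_powerset]
    exact ⟨Finset.union_subset hA (hC.trans Finset.sdiff_subset), Finset.subset_union_left⟩
  · intro F hF
    rw [Finset.mem_filter, Finset.mem_powerset] at hF
    exact Finset.mem_powerset.2 (Finset.sdiff_subset_sdiff hF.1 (le_refl A))
  · intro C hC
    rw [Finset.mem_powerset] at hC
    have hdisj : Disjoint A C :=
      (Finset.disjoint_of_subset_left hC Finset.sdiff_disjoint).symm
    exact Finset.union_sdiff_cancel_left hdisj
  · intro F hF
    rw [Finset.mem_filter, Finset.mem_powerset] at hF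
    exact Finset.union_sdiff_of_subset hF.2
  · intro C hC
    rw [Finset.mem_powerset] at hC
    have hdisj : Disjoint A C :=
      (Finset.disjoint_of_subset_left hC Finset.sdiff_disjoint).symm
    have hFE : A ∪ C ⊆ M.E := Finset.union_subset hA (hC.trans Finset.sdiff_subset)
    have hCA : C ∪ A = A ∪ C := Finset.union_comm C A
    have hcardF : (A ∪ C).card = A.card + C.card := Finset.card_union_of_disjoint hdisj
    have r1 : M.rk B ≤ M.rk A := hM.2.1 B A hB hA
    have r2 : M.rk A ≤ M.rk (A ∪ C) := hM.2.1 A (A ∪ C) Finset.subset_union_left hFE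
    have r3 : M.rk (A ∪ C) ≤ M.rk M.E := hM.2.1 (A ∪ C) M.E hFE (le_refl M.E)
    have r4 : M.rk A ≤ M.rk B + (A.card - B.card) := aux_rk_ext hM hB hA
    have r5 : M.rk (A ∪ C) ≤ M.rk A + ((A ∪ C).card - A.card) :=
      aux_rk_ext hM Finset.subset_union_left hFE
    have r6 : M.rk M.E ≤ M.rk (A ∪ C) + (M.E.card - (A ∪ C).card) :=
      aux_rk_ext hM hFE (le_refl M.E)
    have c1 : M.rk B ≤ B.card := hM.1 B (hB.trans hA)
    have c2 : M.rk A ≤ A.card := hM.1 A hA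
    have c3 : M.rk (A ∪ C) ≤ (A ∪ C).card := hM.1 (A ∪ C) hFE
    have c4 : B.card ≤ A.card := Finset.card_le_card hB
    have c5 : (A ∪ C).card ≤ M.E.card := Finset.card_le_card hFE
    have hAB : (A \ B).card = A.card - B.card := Finset.card_sdiff_of_subset hB
    have hsd : ((M.E \ A) \ C).card = M.E.card - (A ∪ C).card := by
      rw [sdiff_sdiff, Finset.sup_eq_union, Finset.card_sdiff_of_subset hFE]
    have e1 : (A \ B).card - (M.rk A - M.rk B)
        = (A.card - M.rk A) - (B.card - M.rk B) := by omega
    have e2 : C.card - (M.rk (A ∪ C) - M.rk A)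
        = ((A ∪ C).card - M.rk (A ∪ C)) - (A.card - M.rk A) := by omega
    have e3 : (M.rk M.E - M.rk A) - (M.rk (A ∪ C) - M.rk A)
        = M.rk M.E - M.rk (A ∪ C) := by omega
    have e4 : ((M.E \ A) \ C).card - ((M.rk M.E - M.rk A) - (M.rk (A ∪ C) - M.rk A))
        = (M.E.card - M.rk M.E) - ((A ∪ C).card - M.rk (A ∪ C)) := by omega
    rw [auxT, hCA, e1, e2, e4, e3]
    ring

/-- Universal convolution formula for the universal Tutte character of matroids. -/
theorem universal_convolution (M : PreMatroid α) (hM : M.IsMatroid)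
    (u0 v0 u1 v1 u2 v2 : R) :
    M.Tfour (-u0) (-v0) u2 v2 =
      ∑ A ∈ M.E.powerset,
        (M.restrict A).Tfour (-u0) (-v0) u1 v1 * (M.contract A).Tfour (-u1) (-v1) u2 v2 := by
  calc M.Tfour (-u0) (-v0) u2 v2
      = ∑ F ∈ M.E.powerset,
          ((-u0) ^ M.rk F * (-v0) ^ (F.card - M.rk F)) *
          (u2 ^ (M.rk M.E - M.rk F) * v2 ^ ((M.E.card - M.rk M.E) - (F.card - M.rk F))) := by
        rw [Tfour]
        refine Finset.sum_congr rfl fun F hF => ?_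
        rw [Finset.mem_powerset] at hF
        have r3 : M.rk F ≤ M.rk M.E := hM.2.1 F M.E hF (le_refl M.E)
        have r6 : M.rk M.E ≤ M.rk F + (M.E.card - F.card) := aux_rk_ext hM hF (le_refl M.E)
        have c3 : M.rk F ≤ F.card := hM.1 F hF
        have c5 : F.card ≤ M.E.card := Finset.card_le_card hF
        have hsd : (M.E \ F).card = M.E.card - F.card := Finset.card_sdiff_of_subset hF
        have e : (M.E \ F).card - (M.rank - M.rk F)
            = (M.E.card - M.rk M.E) - (F.card - M.rk F) := by
          rw [rank] at *; omega
        rw [e, rank]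
        ring
    _ = ∑ F ∈ M.E.powerset, ∑ B ∈ F.powerset,
          ∑ A ∈ F.powerset.filter (fun A => B ⊆ A), auxT M u0 v0 u1 v1 u2 v2 B A F := by
        refine Finset.sum_congr rfl fun F hF => ?_
        rw [Finset.mem_powerset] at hF
        have key : ∀ B ∈ F.powerset,
            (∑ A ∈ F.powerset.filter (fun A => B ⊆ A), auxT M u0 v0 u1 v1 u2 v2 B A F)
            = (((-u0) ^ M.rk B * (-v0) ^ (B.card - M.rk B)) *
               (u2 ^ (M.rk M.E - M.rk F) * v2 ^ ((M.E.card - M.rk M.E) - (F.card - M.rk F)))) *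
              (if F = B then 1 else 0) := by
          intro B hB
          rw [Finset.mem_powerset] at hB
          rw [← aux_key hM u1 v1 hB hF, Finset.mul_sum]
          refine Finset.sum_congr rfl fun A hA => ?_
          rw [auxT]
          ring
        rw [Finset.sum_congr rfl key]
        have : ∀ B ∈ F.powerset,
            (((-u0) ^ M.rk B * (-v0) ^ (B.card - M.rk B)) *
             (u2 ^ (M.rk M.E - M.rk F) * v2 ^ ((M.E.card - M.rk M.E) - (F.card - M.rk F)))) *
            (if F = B then 1 else 0)
            = if F = B then
                ((-u0) ^ M.rk B * (-v0) ^ (B.card - M.rk B)) *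
                (u2 ^ (M.rk M.E - M.rk F) * v2 ^ ((M.E.card - M.rk M.E) - (F.card - M.rk F)))
              else 0 := by
          intro B _
          split <;> simp
        rw [Finset.sum_congr rfl this, Finset.sum_ite_eq, if_pos (Finset.mem_powerset_self F)]
    _ = ∑ F ∈ M.E.powerset, ∑ A ∈ F.powerset,
          ∑ B ∈ A.powerset, auxT M u0 v0 u1 v1 u2 v2 B A F := by
        refine Finset.sum_congr rfl fun F hF => ?_
        refine Finset.sum_comm' ?_
        intro B A
        simp only [Finset.mem_filter, Finset.mem_powerset]
        constructor
        · rintro ⟨h1, h2, h3⟩; exact ⟨h3, h2⟩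
        · rintro ⟨h1, h2⟩; exact ⟨h1.trans h2, h2, h1⟩
    _ = ∑ A ∈ M.E.powerset, ∑ F ∈ M.E.powerset.filter (fun F => A ⊆ F),
          ∑ B ∈ A.powerset, auxT M u0 v0 u1 v1 u2 v2 B A F := by
        refine (Finset.sum_comm' ?_).symm
        intro A F
        simp only [Finset.mem_filter, Finset.mem_powerset]
        constructor
        · rintro ⟨h1, h2, h3⟩; exact ⟨h3, h2⟩
        · rintro ⟨h1, h2⟩; exact ⟨h1.trans h2, h2, h1⟩
    _ = ∑ A ∈ M.E.powerset, ∑ B ∈ A.powerset,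
          ∑ F ∈ M.E.powerset.filter (fun F => A ⊆ F), auxT M u0 v0 u1 v1 u2 v2 B A F := by
        exact Finset.sum_congr rfl fun A _ => Finset.sum_comm
    _ = ∑ A ∈ M.E.powerset,
          (M.restrict A).Tfour (-u0) (-v0) u1 v1 * (M.contract A).Tfour (-u1) (-v1) u2 v2 := by
        refine Finset.sum_congr rfl fun A hA => ?_
        rw [Finset.mem_powerset] at hA
        exact (aux_expand hM u0 v0 u1 v1 u2 v2 hA).symm

end PreMatroid
end

section
/- Let M be a finite matroid on ground set E and let a,b,c,d be elements of a commutative ring R. Then 𝔗_M(1−ab, 1−cd) = Σ_{A⊆E} a^{rk(M)−rk(A)} · d^{|A|−rk(A)} · 𝔗_{M|A}(1−a, 1−c) · 𝔗_{M/A}(1−b, 1−d). -/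
open Finset

namespace PreMatroid

variable {α : Type*} [DecidableEq α] {R : Type*} [CommRing R]

private lemma neg_one_pow_congr' {m n : ℕ} (h : m % 2 = n % 2) : (-1 : R) ^ m = (-1) ^ n := by
  conv_lhs => rw [← Nat.div_add_mod m 2]
  conv_rhs => rw [← Nat.div_add_mod n 2]
  rw [pow_add, pow_add, pow_mul, pow_mul, h]
  norm_num

private lemma sum_powerset_sign' (S : Finset α) :
    ∑ A ∈ S.powerset, (-1 : R) ^ A.card = if S = ∅ then 1 else 0 := by
  have h := Finset.sum_powerset_neg_one_pow_card (x := S)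
  have h2 := congrArg (fun z : ℤ => (z : R)) h
  push_cast at h2
  simpa using h2

private lemma sum_interval_sign' (B S : Finset α) (hBS : B ⊆ S) :
    ∑ A ∈ S.powerset.filter (fun A => B ⊆ A), (-1 : R) ^ (S.card - A.card)
      = if B = S then 1 else 0 := by
  have key : ∑ A ∈ S.powerset.filter (fun A => B ⊆ A), (-1 : R) ^ (S.card - A.card)
      = ∑ A' ∈ (S \ B).powerset, (-1 : R) ^ A'.card := by
    refine Finset.sum_nbij' (fun A => S \ A) (fun A' => S \ A') ?_ ?_ ?_ ?_ ?_
    · intro A hA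
      rw [mem_filter, mem_powerset] at hA
      exact mem_powerset.mpr (sdiff_subset_sdiff (Finset.Subset.refl S) hA.2)
    · intro A' hA'
      rw [mem_powerset] at hA'
      rw [mem_filter, mem_powerset]
      refine ⟨sdiff_subset, fun x hx => ?_⟩
      rw [mem_sdiff]
      exact ⟨hBS hx, fun hx' => (mem_sdiff.mp (hA' hx')).2 hx⟩
    · intro A hA
      rw [mem_filter, mem_powerset] at hA
      exact Finset.sdiff_sdiff_eq_self hA.1
    · intro A' hA'
      rw [mem_powerset] at hA'
      exact Finset.sdiff_sdiff_eq_self (hA'.trans sdiff_subset)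
    · intro A hA
      rw [mem_filter, mem_powerset] at hA
      rw [card_sdiff_of_subset hA.1]
  rw [key, sum_powerset_sign']
  congr 1
  rw [sdiff_eq_empty_iff_subset]
  exact propext ⟨fun h => Finset.Subset.antisymm hBS h, fun h => h ▸ Finset.Subset.refl S⟩

private lemma pair_reindex' (E : Finset α) (F : Finset α → Finset α → R) :
    ∑ A ∈ E.powerset, ∑ C ∈ (E \ A).powerset, F A C
      = ∑ S ∈ E.powerset, ∑ A ∈ S.powerset, F A (S \ A) := by
  have step : ∀ A ∈ E.powerset, ∑ C ∈ (E \ A).powerset, F A C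
      = ∑ S ∈ E.powerset.filter (fun S => A ⊆ S), F A (S \ A) := by
    intro A hA
    rw [mem_powerset] at hA
    refine Finset.sum_nbij' (fun C => A ∪ C) (fun S => S \ A) ?_ ?_ ?_ ?_ ?_
    · intro C hC
      rw [mem_powerset] at hC
      rw [mem_filter, mem_powerset]
      exact ⟨union_subset hA (hC.trans sdiff_subset), subset_union_left⟩
    · intro S hS
      rw [mem_filter, mem_powerset] at hS
      exact mem_powerset.mpr (sdiff_subset_sdiff hS.1 (Finset.Subset.refl A))
    · intro C hC
      rw [mem_powerset] at hC
      exact union_sdiff_cancel_left (disjoint_sdiff.mono_right hC)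
    · intro S hS
      rw [mem_filter, mem_powerset] at hS
      exact union_sdiff_of_subset hS.2
    · intro C hC
      rw [mem_powerset] at hC
      rw [union_sdiff_cancel_left (disjoint_sdiff.mono_right hC)]
  rw [Finset.sum_congr rfl step]
  refine Finset.sum_comm' ?_
  intro A S
  simp only [mem_filter, mem_powerset]
  constructor
  · rintro ⟨h1, h2, h3⟩; exact ⟨h3, h2⟩
  · rintro ⟨h3, h2⟩; exact ⟨h3.trans h2, h2, h3⟩

/-- Kung's four-variable convolution formula for the Tutte polynomial. -/
theorem tutte_convolution_four (M : PreMatroid α) (hM : M.IsMatroid) (a b c d : R) :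
    M.tutte (1 - a * b) (1 - c * d) =
      ∑ A ∈ M.E.powerset,
        a ^ (M.rank - M.rk A) * d ^ (A.card - M.rk A) *
          (M.restrict A).tutte (1 - a) (1 - c) * (M.contract A).tutte (1 - b) (1 - d) := by
  obtain ⟨hcard, hmono, hsub⟩ := hM
  have hrk0 : M.rk ∅ = 0 := Nat.le_zero.mp (by simpa using hcard ∅ (empty_subset M.E))
  have expand : ∀ A ∈ M.E.powerset,
      a ^ (M.rank - M.rk A) * d ^ (A.card - M.rk A) *
        (M.restrict A).tutte (1 - a) (1 - c) * (M.contract A).tutte (1 - b) (1 - d)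
      = ∑ C ∈ (M.E \ A).powerset, ∑ B ∈ A.powerset,
          (-1 : R) ^ (B.card + C.card + M.rk M.E) *
            ((a ^ (M.rk M.E - M.rk B) * c ^ (B.card - M.rk B)) *
             (b ^ (M.rk M.E - M.rk (A ∪ C)) * d ^ ((A ∪ C).card - M.rk (A ∪ C)))) := by
    intro A hA
    rw [mem_powerset] at hA
    simp only [tutte, restrict, contract, rank]
    simp only [Finset.mul_sum, Finset.sum_mul]
    refine Finset.sum_congr rfl fun C hC => Finset.sum_congr rfl fun B hB => ?_
    rw [mem_powerset] at hB hC
    have hBE : B ⊆ M.E := hB.trans hA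
    have hCE : C ⊆ M.E := hC.trans sdiff_subset
    have hdisj : Disjoint A C := disjoint_sdiff.mono_right hC
    have hACE : A ∪ C ⊆ M.E := union_subset hA hCE
    have i1 : M.rk B ≤ M.rk A := hmono B A hB hA
    have i2 : M.rk A ≤ M.rk M.E := hmono A M.E hA (Finset.Subset.refl _)
    have i3 : M.rk B ≤ B.card := hcard B hBE
    have i4 : M.rk A ≤ A.card := hcard A hA
    have i5 : M.rk (A ∪ C) ≤ M.rk M.E := hmono _ _ hACE (Finset.Subset.refl _)
    have i6 : M.rk A ≤ M.rk (A ∪ C) := hmono A (A ∪ C) subset_union_left hACE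
    have i7 : M.rk (A ∪ C) ≤ M.rk A + C.card := by
      have h8 := hsub A C hA hCE
      have h9 : M.rk C ≤ C.card := hcard C hCE
      rw [Finset.disjoint_iff_inter_eq_empty.mp hdisj, hrk0] at h8
      omega
    have i8 : (A ∪ C).card = A.card + C.card := card_union_of_disjoint hdisj
    rw [union_comm C A, sdiff_union_of_subset hA]
    rw [show (1 - a - 1 : R) = -a by ring, show (1 - c - 1 : R) = -c by ring,
        show (1 - b - 1 : R) = -b by ring, show (1 - d - 1 : R) = -d by ring]
    rw [neg_pow, neg_pow, neg_pow, neg_pow]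
    rw [show (M.rk M.E - M.rk A) - (M.rk (A ∪ C) - M.rk A) = M.rk M.E - M.rk (A ∪ C) by omega]
    rw [show M.rk M.E - M.rk B = (M.rk M.E - M.rk A) + (M.rk A - M.rk B) by omega]
    rw [show (A ∪ C).card - M.rk (A ∪ C)
        = (A.card - M.rk A) + (C.card - (M.rk (A ∪ C) - M.rk A)) by omega]
    have hsign : (-1 : R) ^ (B.card + C.card + M.rk M.E)
        = (-1) ^ (M.rk A - M.rk B) * (-1) ^ (B.card - M.rk B) *
          ((-1) ^ (M.rk M.E - M.rk (A ∪ C)) * (-1) ^ (C.card - (M.rk (A ∪ C) - M.rk A))) := by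
      rw [← pow_add, ← pow_add, ← pow_add]
      exact neg_one_pow_congr' (by omega)
    rw [hsign, pow_add, pow_add]
    ring
  rw [Finset.sum_congr rfl expand]
  rw [pair_reindex' M.E (fun A C => ∑ B ∈ A.powerset,
        (-1 : R) ^ (B.card + C.card + M.rk M.E) *
          ((a ^ (M.rk M.E - M.rk B) * c ^ (B.card - M.rk B)) *
           (b ^ (M.rk M.E - M.rk (A ∪ C)) * d ^ ((A ∪ C).card - M.rk (A ∪ C)))))]
  have step2 : ∀ S ∈ M.E.powerset,
      (∑ A ∈ S.powerset, ∑ B ∈ A.powerset,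
          (-1 : R) ^ (B.card + (S \ A).card + M.rk M.E) *
            ((a ^ (M.rk M.E - M.rk B) * c ^ (B.card - M.rk B)) *
             (b ^ (M.rk M.E - M.rk (A ∪ S \ A)) * d ^ ((A ∪ S \ A).card - M.rk (A ∪ S \ A)))))
      = (-1 : R) ^ (S.card + M.rk M.E) *
          ((a ^ (M.rk M.E - M.rk S) * c ^ (S.card - M.rk S)) *
           (b ^ (M.rk M.E - M.rk S) * d ^ (S.card - M.rk S))) := by
    intro S hS
    rw [mem_powerset] at hS
    have h1 : ∀ A ∈ S.powerset, ∀ B ∈ A.powerset,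
        (-1 : R) ^ (B.card + (S \ A).card + M.rk M.E) *
          ((a ^ (M.rk M.E - M.rk B) * c ^ (B.card - M.rk B)) *
           (b ^ (M.rk M.E - M.rk (A ∪ S \ A)) * d ^ ((A ∪ S \ A).card - M.rk (A ∪ S \ A))))
        = (-1 : R) ^ (S.card - A.card) *
            ((-1) ^ (B.card + M.rk M.E) *
              ((a ^ (M.rk M.E - M.rk B) * c ^ (B.card - M.rk B)) *
               (b ^ (M.rk M.E - M.rk S) * d ^ (S.card - M.rk S)))) := by
      intro A hA B hB
      rw [mem_powerset] at hA
      rw [union_sdiff_of_subset hA, card_sdiff_of_subset hA]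
      rw [show B.card + (S.card - A.card) + M.rk M.E
          = (S.card - A.card) + (B.card + M.rk M.E) by omega, pow_add]
      ring
    rw [Finset.sum_congr rfl (fun A hA => Finset.sum_congr rfl (h1 A hA))]
    rw [Finset.sum_comm' (s := S.powerset) (t := fun A => A.powerset)
        (t' := S.powerset) (s' := fun B => S.powerset.filter (fun A => B ⊆ A))
        (by
          intro A B
          simp only [mem_filter, mem_powerset]
          constructor
          · rintro ⟨h2, h3⟩; exact ⟨⟨h2, h3⟩, h3.trans h2⟩
          · rintro ⟨⟨h2, h3⟩, _⟩; exact ⟨h2, h3⟩)]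
    have h2 : ∀ B ∈ S.powerset,
        (∑ A ∈ S.powerset.filter (fun A => B ⊆ A),
          (-1 : R) ^ (S.card - A.card) *
            ((-1) ^ (B.card + M.rk M.E) *
              ((a ^ (M.rk M.E - M.rk B) * c ^ (B.card - M.rk B)) *
               (b ^ (M.rk M.E - M.rk S) * d ^ (S.card - M.rk S)))))
        = if B = S then
            (-1 : R) ^ (B.card + M.rk M.E) *
              ((a ^ (M.rk M.E - M.rk B) * c ^ (B.card - M.rk B)) *
               (b ^ (M.rk M.E - M.rk S) * d ^ (S.card - M.rk S)))
          else 0 := by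
      intro B hB
      rw [mem_powerset] at hB
      rw [← Finset.sum_mul, sum_interval_sign' B S hB]
      rw [ite_mul, one_mul, zero_mul]
    rw [Finset.sum_congr rfl h2, Finset.sum_ite_eq' S.powerset S, if_pos (mem_powerset_self S)]
  rw [Finset.sum_congr rfl step2]
  refine Finset.sum_congr rfl fun S hS => ?_
  rw [mem_powerset] at hS
  have h1 : M.rk S ≤ M.rk M.E := hmono S M.E hS (Finset.Subset.refl _)
  have h2 : M.rk S ≤ S.card := hcard S hS
  have hsgn : (-1 : R) ^ (S.card + M.rk M.E)
      = (-1) ^ ((M.rk M.E - M.rk S) + (S.card - M.rk S)) := neg_one_pow_congr' (by omega)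
  simp only [rank]
  rw [show (1 - a * b - 1 : R) = -(a * b) by ring, show (1 - c * d - 1 : R) = -(c * d) by ring]
  rw [neg_pow (a * b), neg_pow (c * d), hsgn, pow_add, mul_pow, mul_pow]
  ring


end PreMatroid
end

section
/- Let M be a finite matroid on ground set E. Then the Kook–Reiner–Stanton/Etienne–Las Vergnas convolution formula holds: 𝔗_M(x,y) = Σ_{A⊆E} 𝔗_{M|A}(0,y) · 𝔗_{M/A}(x,0), as an identity of polynomials in x and y (equivalently, an identity valid for all elements x,y of any commutative ring). -/
open Finset

namespace PreMatroid

private lemma neg_one_pow_sub_kRS {R : Type*} [CommRing R] {a b : ℕ} (h : b ≤ a) :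
    ((-1 : R)) ^ (a - b) = (-1) ^ a * (-1) ^ b := by
  have h1 : ((-1 : R)) ^ a = (-1) ^ (a - b) * (-1) ^ b := by
    rw [← pow_add, Nat.sub_add_cancel h]
  rw [h1, mul_assoc, ← pow_add, ← two_mul, pow_mul, neg_one_sq, one_pow, mul_one]

private lemma sum_powerset_neg_one_pow_card_ring {α : Type*} [DecidableEq α] {R : Type*}
    [CommRing R] (s : Finset α) :
    (∑ t ∈ s.powerset, (-1 : R) ^ t.card) = if s = ∅ then 1 else 0 := by
  have := Finset.sum_powerset_neg_one_pow_card (x := s)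
  calc (∑ t ∈ s.powerset, (-1 : R) ^ t.card)
      = ((∑ t ∈ s.powerset, (-1 : ℤ) ^ t.card : ℤ) : R) := by push_cast; ring
    _ = if s = ∅ then 1 else 0 := by rw [this]; split <;> simp

/-- Reindexing pairs `(A, D)` with `D ⊆ E \ A` by pairs `(C, A)` with `A ⊆ C`, `C = A ∪ D`. -/
private lemma sum_sdiff_reindex {α : Type*} [DecidableEq α] {R : Type*} [AddCommMonoid R]
    (E : Finset α) (f : Finset α → Finset α → R) :
    ∑ A ∈ E.powerset, ∑ D ∈ (E \ A).powerset, f A D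
      = ∑ C ∈ E.powerset, ∑ A ∈ C.powerset, f A (C \ A) := by
  rw [Finset.sum_sigma', Finset.sum_sigma']
  refine Finset.sum_nbij' (fun p => ⟨p.1 ∪ p.2, p.1⟩) (fun p => ⟨p.2, p.1 \ p.2⟩)
    ?_ ?_ ?_ ?_ ?_
  · rintro ⟨A, D⟩ hp
    simp only [Finset.mem_sigma, Finset.mem_powerset] at hp ⊢
    exact ⟨Finset.union_subset hp.1 (hp.2.trans Finset.sdiff_subset),
      Finset.subset_union_left⟩
  · rintro ⟨C, A⟩ hp
    simp only [Finset.mem_sigma, Finset.mem_powerset] at hp ⊢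
    exact ⟨hp.2.trans hp.1, Finset.sdiff_subset_sdiff hp.1 (subset_refl A)⟩
  · rintro ⟨A, D⟩ hp
    simp only [Finset.mem_sigma, Finset.mem_powerset] at hp
    have hd : Disjoint A D := Finset.disjoint_of_subset_right hp.2 disjoint_sdiff
    simp [Finset.union_sdiff_cancel_left hd]
  · rintro ⟨C, A⟩ hp
    simp only [Finset.mem_sigma, Finset.mem_powerset] at hp
    simp [Finset.union_sdiff_of_subset hp.2]
  · rintro ⟨A, D⟩ hp
    simp only [Finset.mem_sigma, Finset.mem_powerset] at hp
    have hd : Disjoint A D := Finset.disjoint_of_subset_right hp.2 disjoint_sdiff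
    simp [Finset.union_sdiff_cancel_left hd]

/-- Swapping the order of a sum over nested subsets. -/
private lemma sum_nested_swap {α : Type*} [DecidableEq α] {R : Type*} [AddCommMonoid R]
    (C : Finset α) (f : Finset α → Finset α → R) :
    ∑ A ∈ C.powerset, ∑ B ∈ A.powerset, f A B
      = ∑ B ∈ C.powerset, ∑ A ∈ C.powerset.filter (fun A => B ⊆ A), f A B := by
  have h1 : ∀ A ∈ C.powerset, ∑ B ∈ A.powerset, f A B
      = ∑ B ∈ C.powerset, if B ⊆ A then f A B else 0 := by
    intro A hA
    rw [Finset.mem_powerset] at hA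
    rw [← Finset.sum_filter]
    congr 1
    ext B
    simp only [Finset.mem_powerset, Finset.mem_filter]
    exact ⟨fun h => ⟨h.trans hA, h⟩, fun h => h.2⟩
  rw [Finset.sum_congr rfl h1, Finset.sum_comm]
  exact Finset.sum_congr rfl fun B _ => (Finset.sum_filter _ _).symm

/-- The Möbius-type cancellation: summing `(-1)^{|C|-|A|}` over `B ⊆ A ⊆ C`. -/
private lemma sum_interval_neg_one_pow {α : Type*} [DecidableEq α] {R : Type*} [CommRing R]
    {B C : Finset α} (hBC : B ⊆ C) :
    ∑ A ∈ C.powerset.filter (fun A => B ⊆ A), ((-1 : R)) ^ (C.card - A.card)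
      = if B = C then 1 else 0 := by
  have key : ∑ A ∈ C.powerset.filter (fun A => B ⊆ A), ((-1 : R)) ^ (C.card - A.card)
      = ∑ S ∈ (C \ B).powerset, (-1 : R) ^ ((C \ B).card - S.card) := by
    refine Finset.sum_nbij' (fun A => A \ B) (fun S => S ∪ B) ?_ ?_ ?_ ?_ ?_
    · intro A hA
      simp only [Finset.mem_filter, Finset.mem_powerset] at hA ⊢
      exact Finset.sdiff_subset_sdiff hA.1 (subset_refl B)
    · intro S hS
      simp only [Finset.mem_filter, Finset.mem_powerset] at hS ⊢
      exact ⟨Finset.union_subset (hS.trans Finset.sdiff_subset) hBC,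
        Finset.subset_union_right⟩
    · intro A hA
      simp only [Finset.mem_filter, Finset.mem_powerset] at hA
      exact Finset.sdiff_union_of_subset hA.2
    · intro S hS
      simp only [Finset.mem_powerset] at hS
      have hd : Disjoint S B := Finset.disjoint_of_subset_left hS Finset.sdiff_disjoint
      exact Finset.union_sdiff_cancel_right hd
    · intro A hA
      simp only [Finset.mem_filter, Finset.mem_powerset] at hA
      congr 1
      rw [Finset.card_sdiff_of_subset hBC, Finset.card_sdiff_of_subset hA.2]
      have h1 := Finset.card_le_card hA.1
      have h2 := Finset.card_le_card hA.2
      omega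
  rw [key]
  have hcb : ∀ S ∈ (C \ B).powerset, ((-1 : R)) ^ ((C \ B).card - S.card)
      = (-1 : R) ^ (C \ B).card * (-1 : R) ^ S.card := by
    intro S hS
    rw [Finset.mem_powerset] at hS
    exact neg_one_pow_sub_kRS (Finset.card_le_card hS)
  rw [Finset.sum_congr rfl hcb, ← Finset.mul_sum, sum_powerset_neg_one_pow_card_ring]
  by_cases h : C \ B = ∅
  · have hBC' : B = C := Finset.Subset.antisymm hBC (Finset.sdiff_eq_empty_iff_subset.mp h)
    simp [h, hBC']
  · have hBC' : B ≠ C := by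
      intro hh
      exact h (by simp [hh])
    simp [h, hBC']

/-- The Kook–Reiner–Stanton / Etienne–Las Vergnas convolution formula
`𝔗_M(x,y) = Σ_{A⊆E} 𝔗_{M|A}(0,y) 𝔗_{M/A}(x,0)`, valid for all elements `x, y`
of any commutative ring. -/
theorem tutte_convolution_KRS {α : Type*} [DecidableEq α] (M : PreMatroid α)
    (hM : M.IsMatroid) (R : Type*) [CommRing R] (x y : R) :
    M.tutte x y =
      ∑ A ∈ M.E.powerset, (M.restrict A).tutte 0 y * (M.contract A).tutte x 0 := by
  obtain ⟨hcard, hmono, hsub⟩ := hM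
  set r := M.rk with hr
  set E := M.E with hE
  -- the "collected" summand, depending only on B and C = A ∪ D
  set G : Finset α → Finset α → R := fun B C =>
    (y - 1) ^ (B.card - r B) * (x - 1) ^ (r E - r C) * (-1) ^ (r B) * (-1) ^ (r C) with hG
  -- Step 1: rewrite each product of Tutte polynomials as a double sum
  have step1 : ∀ A ∈ E.powerset,
      (M.restrict A).tutte 0 y * (M.contract A).tutte x 0
        = ∑ D ∈ (E \ A).powerset, ∑ B ∈ A.powerset, G B (A ∪ D) * (-1) ^ D.card := by
    intro A hA
    rw [Finset.mem_powerset] at hA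
    have hEA : (E \ A) ∪ A = E := Finset.sdiff_union_of_subset hA
    show (∑ B ∈ A.powerset, ((0 : R) - 1) ^ (r A - r B) * (y - 1) ^ (B.card - r B)) *
        (∑ D ∈ (E \ A).powerset,
          (x - 1) ^ ((r ((E \ A) ∪ A) - r A) - (r (D ∪ A) - r A)) *
            ((0 : R) - 1) ^ (D.card - (r (D ∪ A) - r A))) = _
    rw [Finset.sum_mul_sum, Finset.sum_comm]
    refine Finset.sum_congr rfl fun D hD => Finset.sum_congr rfl fun B hB => ?_
    rw [Finset.mem_powerset] at hD hB
    -- basic rank inequalities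
    have hBE : B ⊆ E := hB.trans hA
    have hDUA : D ∪ A ⊆ E := Finset.union_subset (hD.trans Finset.sdiff_subset) hA
    have h1 : r B ≤ r A := hmono B A hB hA
    have h2 : r A ≤ r (D ∪ A) := hmono A (D ∪ A) Finset.subset_union_right hDUA
    have h3 : r (D ∪ A) ≤ r E := hmono (D ∪ A) E hDUA (subset_refl E)
    have h4 : r (D ∪ A) ≤ D.card + r A := by
      have := hsub D A (hD.trans Finset.sdiff_subset) hA
      have := hcard D (hD.trans Finset.sdiff_subset)
      omega
    have e1 : (r ((E \ A) ∪ A) - r A) - (r (D ∪ A) - r A) = r E - r (D ∪ A) := by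
      rw [hEA]; omega
    have e2 : ((0 : R) - 1) = -1 := by ring
    rw [e1, e2, Finset.union_comm A D]
    have e3 : ((-1 : R)) ^ (r A - r B) = (-1) ^ (r A) * (-1) ^ (r B) :=
      neg_one_pow_sub_kRS h1
    have e4 : ((-1 : R)) ^ (D.card - (r (D ∪ A) - r A))
        = (-1) ^ D.card * ((-1) ^ (r (D ∪ A)) * (-1) ^ (r A)) := by
      rw [neg_one_pow_sub_kRS (show r (D ∪ A) - r A ≤ D.card by omega),
        neg_one_pow_sub_kRS h2]
    rw [e3, e4, hG]
    have e5 : ((-1 : R)) ^ (r A) * (-1) ^ (r A) = 1 := by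
      rw [← pow_add, ← two_mul, pow_mul, neg_one_sq, one_pow]
    calc ((-1 : R)) ^ r A * (-1) ^ r B * (y - 1) ^ (B.card - r B) *
          ((x - 1) ^ (r E - r (D ∪ A)) *
            ((-1) ^ D.card * ((-1) ^ r (D ∪ A) * (-1) ^ r A)))
        = (((-1 : R)) ^ r A * (-1) ^ r A) *
            ((y - 1) ^ (B.card - r B) * (x - 1) ^ (r E - r (D ∪ A)) * (-1) ^ r B *
              (-1) ^ r (D ∪ A) * (-1) ^ D.card) := by ring
      _ = _ := by rw [e5, one_mul]
  rw [Finset.sum_congr rfl step1, sum_sdiff_reindex]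
  -- Step 2: simplify the inner sums for each C
  have step2 : ∀ C ∈ E.powerset,
      (∑ A ∈ C.powerset, ∑ B ∈ A.powerset, G B (A ∪ (C \ A)) * (-1) ^ (C \ A).card)
        = (x - 1) ^ (M.rank - r C) * (y - 1) ^ (C.card - r C) := by
    intro C hC
    rw [Finset.mem_powerset] at hC
    have h1 : ∀ A ∈ C.powerset, ∑ B ∈ A.powerset, G B (A ∪ (C \ A)) * (-1) ^ (C \ A).card
        = ∑ B ∈ A.powerset, G B C * (-1) ^ (C.card - A.card) := by
      intro A hA
      rw [Finset.mem_powerset] at hA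
      rw [Finset.union_sdiff_of_subset hA, Finset.card_sdiff_of_subset hA]
    rw [Finset.sum_congr rfl h1, sum_nested_swap]
    have h2 : ∀ B ∈ C.powerset,
        (∑ A ∈ C.powerset.filter (fun A => B ⊆ A), G B C * (-1) ^ (C.card - A.card))
          = G B C * (if B = C then 1 else 0) := by
      intro B hB
      rw [Finset.mem_powerset] at hB
      rw [← Finset.mul_sum, sum_interval_neg_one_pow hB]
    rw [Finset.sum_congr rfl h2]
    have h3 : ∀ B ∈ C.powerset, G B C * (if B = C then 1 else 0)
        = if B = C then G C C else 0 := by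
      intro B _
      by_cases h : B = C <;> simp [h]
    rw [Finset.sum_congr rfl h3, Finset.sum_ite_eq' C.powerset C (fun _ => G C C),
      if_pos (Finset.mem_powerset.mpr (subset_refl C))]
    have e5 : ((-1 : R)) ^ (r C) * (-1) ^ (r C) = 1 := by
      rw [← pow_add, ← two_mul, pow_mul, neg_one_sq, one_pow]
    show (y - 1) ^ (C.card - r C) * (x - 1) ^ (r E - r C) * (-1) ^ (r C) * (-1) ^ (r C) = _
    rw [mul_assoc, e5, mul_one]
    show (y - 1) ^ (C.card - r C) * (x - 1) ^ (r E - r C)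
      = (x - 1) ^ (r E - r C) * (y - 1) ^ (C.card - r C)
    ring
  rw [Finset.sum_congr rfl step2]
  rfl

end PreMatroid
end

section
/- Let M be a finite matroid on ground set E, let n ≥ 1, and let a_1,…,a_n,b_1,…,b_n be elements of a commutative ring R. Then the iterated convolution formula holds: 𝔗_M(1 − a_1⋯a_n, 1 − b_1⋯b_n) = Σ over chains ∅ = A_0 ⊆ A_1 ⊆ ⋯ ⊆ A_n = E of the product Π_{i=1}^n a_i^{rk(M)−rk(A_i)} · b_i^{|A_{i−1}|−rk(A_{i−1})} · 𝔗_{M|A_i/A_{i−1}}(1−a_i, 1−b_i), where M|A_i/A_{i−1} denotes (M|A_i)/A_{i−1}. -/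
open Finset

/-! ### Auxiliary algebraic lemmas -/

section Aux
variable {α : Type*} [DecidableEq α] {R : Type*} [CommRing R]

lemma tic_neg_one_pow_sub (k m : ℕ) (h : k ≤ m) : ((-1:R))^(m-k) = (-1)^m * (-1)^k := by
  have h1 : ((-1:R))^(m-k) * (-1)^k = (-1)^m := by
    rw [← pow_add, Nat.sub_add_cancel h]
  have h2 : ((-1:R))^k * (-1)^k = 1 := by
    rw [← pow_add, ← two_mul, pow_mul]; simp
  calc ((-1:R))^(m-k) = (-1)^(m-k) * ((-1)^k * (-1)^k) := by rw [h2, mul_one]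
    _ = (-1)^m * (-1)^k := by rw [← mul_assoc, h1]

lemma tic_sum_powerset_neg_one (u : Finset α) :
    ∑ X ∈ u.powerset, ((-1:R))^X.card = if u = ∅ then 1 else 0 := by
  have h1 := Finset.sum_powerset_neg_one_pow_card (x := u)
  have h2 : ((∑ m ∈ u.powerset, (-1 : ℤ) ^ m.card : ℤ) : R)
      = ∑ X ∈ u.powerset, ((-1:R))^X.card := by
    push_cast; rfl
  rw [← h2, h1]
  split <;> simp

/-- Alternating sum over an interval of finsets. -/
lemma tic_sum_interval_neg_one (s t : Finset α) :
    ∑ X ∈ t.powerset.filter (fun X => s ⊆ X), ((-1:R))^X.card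
      = if s = t then (-1)^s.card else 0 := by
  by_cases hst : s ⊆ t
  · have key : ∑ X ∈ t.powerset.filter (fun X => s ⊆ X), ((-1:R))^X.card
        = ∑ Y ∈ (t \ s).powerset, ((-1:R))^(Y ∪ s).card := by
      refine Finset.sum_nbij' (fun X => X \ s) (fun Y => Y ∪ s) ?_ ?_ ?_ ?_ ?_
      · intro X hX
        simp only [mem_filter, mem_powerset] at hX ⊢
        exact sdiff_subset_sdiff hX.1 (Finset.Subset.refl s)
      · intro Y hY
        simp only [mem_powerset] at hY
        simp only [mem_filter, mem_powerset]
        exact ⟨union_subset (hY.trans (sdiff_subset)) hst, subset_union_right⟩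
      · intro X hX
        simp only [mem_filter, mem_powerset] at hX
        show X \ s ∪ s = X
        rw [Finset.sdiff_union_of_subset hX.2]
      · intro Y hY
        simp only [mem_powerset] at hY
        show (Y ∪ s) \ s = Y
        rw [Finset.union_sdiff_cancel_right]
        exact Finset.disjoint_left.mpr (fun a ha => (Finset.mem_sdiff.mp (hY ha)).2)
      · intro X hX
        simp only [mem_filter, mem_powerset] at hX
        show ((-1:R))^X.card = (-1)^((fun Y => Y ∪ s) ((fun X => X \ s) X)).card
        have hXX : (fun Y => Y ∪ s) ((fun X => X \ s) X) = X := by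
          show X \ s ∪ s = X
          rw [Finset.sdiff_union_of_subset hX.2]
        rw [hXX]
    rw [key]
    have hdisj : ∀ Y ∈ (t \ s).powerset, ((-1:R))^(Y ∪ s).card = (-1)^Y.card * (-1)^s.card := by
      intro Y hY
      simp only [mem_powerset] at hY
      rw [card_union_of_disjoint, pow_add]
      exact Finset.disjoint_left.mpr (fun a ha => (Finset.mem_sdiff.mp (hY ha)).2)
    rw [Finset.sum_congr rfl hdisj, ← Finset.sum_mul, tic_sum_powerset_neg_one]
    by_cases h : s = t
    · subst h; simp
    · have hne : t \ s ≠ ∅ := by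
        intro hc
        exact h (Finset.Subset.antisymm hst (Finset.sdiff_eq_empty_iff_subset.mp hc))
      rw [if_neg hne, if_neg h, zero_mul]
  · have h1 : t.powerset.filter (fun X => s ⊆ X) = ∅ := by
      rw [Finset.filter_eq_empty_iff]
      intro X hX hc
      exact hst (hc.trans (Finset.mem_powerset.mp hX))
    have h2 : s ≠ t := by rintro rfl; exact hst (Finset.Subset.refl s)
    rw [h1, if_neg h2, Finset.sum_empty]

lemma tic_prod_telescope {n : ℕ} (u : Fin (n+1) → R) (hu : ∀ j, u j * u j = 1) :
    ∏ i : Fin n, (u i.succ * u i.castSucc) = u (Fin.last n) * u 0 := by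
  induction n with
  | zero => simp [(hu 0)]
  | succ n ih =>
    rw [Fin.prod_univ_castSucc]
    have hcongr : ∀ i : Fin n, u (i.castSucc).succ * u (i.castSucc).castSucc
        = (u ∘ Fin.castSucc) i.succ * (u ∘ Fin.castSucc) i.castSucc := by
      intro i; rfl
    rw [Finset.prod_congr rfl (fun i _ => hcongr i), ih (u ∘ Fin.castSucc) (fun j => hu _)]
    simp only [Function.comp]
    have hlast : (Fin.last n).succ = Fin.last (n+1) := rfl
    have h0 : (0 : Fin (n+1)).castSucc = 0 := rfl
    rw [hlast, h0]
    calc u (Fin.last n).castSucc * u 0 * (u (Fin.last (n+1)) * u (Fin.last n).castSucc)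
        = (u (Fin.last n).castSucc * u (Fin.last n).castSucc) * (u (Fin.last (n+1)) * u 0) := by
          ring
      _ = u (Fin.last (n+1)) * u 0 := by rw [hu, one_mul]

lemma tic_key_alg (x y : R) (r s q p cC cA : ℕ)
    (hpq : p ≤ q) (hqs : q ≤ s) (hsr : s ≤ r) (hpc : p ≤ cA) (hsub : q + cA ≤ p + cC)
    (hcc : cA ≤ cC) :
    x^(r-s) * y^(cA-p) * ((-x)^((s-p)-(q-p)) * (-y)^((cC-cA)-(q-p)))
    = ((-1:R)^s * (-1)^p) * ((-1)^cA) * ((-1)^cC * (x^(r-q) * y^(cC-q))) := by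
  have h1 : (s-p)-(q-p) = s-q := by omega
  have h2 : q - p ≤ cC - cA := by omega
  rw [h1, neg_pow x (s-q), neg_pow y ((cC-cA)-(q-p)), tic_neg_one_pow_sub q s hqs,
    tic_neg_one_pow_sub (q-p) (cC-cA) h2, tic_neg_one_pow_sub p q hpq,
    tic_neg_one_pow_sub cA cC hcc]
  have e1 : x^(r-s) * x^(s-q) = x^(r-q) := by rw [← pow_add]; congr 1; omega
  have e2 : y^(cA-p) * y^((cC-cA)-(q-p)) = y^(cC-q) := by rw [← pow_add]; congr 1; omega
  have e3 : ((-1:R))^q * (-1)^q = 1 := by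
    rw [← pow_add, ← two_mul, pow_mul]; simp
  trans (((-1:R))^q * (-1)^q) * ((((-1:R))^s * (-1)^p) * ((-1)^cA) * ((-1)^cC))
      * ((x^(r-s) * x^(s-q)) * (y^(cA-p) * y^((cC-cA)-(q-p))))
  · ring
  · rw [e1, e2, e3, one_mul]; ring

lemma tic_final_alg (P Q : R) (r k c m : ℕ) (hkr : k ≤ r) (hkc : k ≤ c) :
    ((-1:R))^r * ((((-1:R))^c)^(m+1) * (P^(r-k) * Q^(c-k))) * (-1)^(m*c)
    = (-P)^(r-k) * (-Q)^(c-k) := by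
  have e3 : ((-1:R))^k * (-1)^k = 1 := by
    rw [← pow_add, ← two_mul, pow_mul]; simp
  have e4 : (((-1:R))^c)^(m+1) * (-1)^(m*c) = (-1)^c := by
    rw [← pow_mul, ← pow_add, show c*(m+1) + m*c = c + 2*(m*c) from by ring, pow_add, pow_mul]
    simp
  have hR : (-P)^(r-k) * (-Q)^(c-k)
      = ((-1:R))^r * (-1)^c * (P^(r-k) * Q^(c-k)) := by
    rw [neg_pow P (r-k), neg_pow Q (c-k), tic_neg_one_pow_sub k r hkr,
      tic_neg_one_pow_sub k c hkc]
    trans (((-1:R))^k * (-1)^k) * (((-1)^r * (-1)^c) * (P^(r-k) * Q^(c-k)))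
    · ring
    · rw [e3]; ring
  rw [hR]
  trans ((((-1:R))^c)^(m+1) * (-1)^(m*c)) * ((-1)^r * (P^(r-k) * Q^(c-k)))
  · ring
  · rw [e4]; ring

end Aux

/-! ### The alternating chain-sum lemma -/

section Chain
variable {α : Type*} [DecidableEq α] [Fintype α] {R : Type*} [CommRing R]

/-- lower bounds for the chain entries -/
def cLo (n : ℕ) (E : Finset α) (C : Fin (n+1) → Finset α) (j : Fin (n+2)) : Finset α :=
  Fin.cases ∅ C j ∪ (if j = Fin.last (n+1) then E else ∅)

/-- upper bounds for the chain entries -/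
def cHi (n : ℕ) (E : Finset α) (C : Fin (n+1) → Finset α) (j : Fin (n+2)) : Finset α :=
  if j = 0 then ∅ else Fin.lastCases E C j

/-- weights -/
def cv (n : ℕ) (R : Type*) [CommRing R] (j : Fin (n+2)) (X : Finset α) : R :=
  if j = Fin.last (n+1) then 1 else (-1)^X.card

section Vals
variable (n : ℕ) (E : Finset α) (C : Fin (n+1) → Finset α)

lemma tic_last_ne_zero : (Fin.last (n+1)) ≠ 0 := by
  simp only [ne_eq, Fin.ext_iff, Fin.val_last, Fin.val_zero]; omega

omit [Fintype α] in
lemma cLo_zero : cLo n E C 0 = ∅ := by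
  rw [cLo]
  simp only [Fin.cases_zero, if_neg (Ne.symm (tic_last_ne_zero n)), Finset.union_empty,
    Finset.empty_union]

omit [Fintype α] in
lemma cLo_last : cLo n E C (Fin.last (n+1)) = C (Fin.last n) ∪ E := by
  rw [cLo, ← Fin.succ_last, Fin.cases_succ, if_pos rfl]

omit [Fintype α] in
lemma cLo_succ (i : Fin (n+1)) (h : i.succ ≠ Fin.last (n+1)) : cLo n E C i.succ = C i := by
  rw [cLo, Fin.cases_succ, if_neg h, Finset.union_empty]

omit [DecidableEq α] [Fintype α] in
lemma cHi_zero : cHi n E C 0 = ∅ := by rw [cHi, if_pos rfl]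

omit [DecidableEq α] [Fintype α] in
lemma cHi_last : cHi n E C (Fin.last (n+1)) = E := by
  rw [cHi, if_neg (tic_last_ne_zero n), Fin.lastCases_last]

omit [DecidableEq α] [Fintype α] in
lemma cHi_castSucc (i : Fin (n+1)) (h : i.castSucc ≠ 0) : cHi n E C i.castSucc = C i := by
  rw [cHi, if_neg h, Fin.lastCases_castSucc]

omit [DecidableEq α] [Fintype α] in
lemma cv_last : ∀ X : Finset α, cv n R (Fin.last (n+1)) X = 1 := by
  intro X; rw [cv, if_pos rfl]

omit [DecidableEq α] [Fintype α] in
lemma cv_castSucc (i : Fin (n+1)) : ∀ X : Finset α, cv n R i.castSucc X = (-1)^X.card := by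
  intro X; rw [cv, if_neg (Fin.castSucc_lt_last i).ne]

end Vals

lemma tic_chain_count (n : ℕ) (E : Finset α) (C : Fin (n+1) → Finset α) :
    ∑ D ∈ Finset.univ.filter (fun D : Fin (n+2) → Finset α =>
        (D 0 = ∅ ∧ D (Fin.last (n+1)) = E ∧ ∀ i : Fin (n+1), D i.castSucc ⊆ D i.succ) ∧
        (∀ i : Fin (n+1), D i.castSucc ⊆ C i ∧ C i ⊆ D i.succ)),
      ∏ i : Fin (n+1), ((-1:R))^(D i.castSucc).card
    = if (∀ i, C i = C 0) ∧ C 0 ⊆ E then (-1)^(n * (C 0).card) else 0 := by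
  have hmem : ∀ D : Fin (n+2) → Finset α,
      ((D 0 = ∅ ∧ D (Fin.last (n+1)) = E ∧ ∀ i : Fin (n+1), D i.castSucc ⊆ D i.succ) ∧
        (∀ i : Fin (n+1), D i.castSucc ⊆ C i ∧ C i ⊆ D i.succ)) ↔
      (∀ j, D j ⊆ cHi n E C j ∧ cLo n E C j ⊆ D j) := by
    intro D
    constructor
    · rintro ⟨⟨h0, hl, hch⟩, hs⟩ j
      by_cases hj0 : j = 0
      · subst hj0
        rw [cHi_zero, cLo_zero, h0]
        exact ⟨Finset.Subset.refl _, Finset.Subset.refl _⟩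
      · by_cases hjl : j = Fin.last (n+1)
        · subst hjl
          rw [cHi_last, cLo_last, hl]
          refine ⟨Finset.Subset.refl _, Finset.union_subset ?_ (Finset.Subset.refl _)⟩
          have := (hs (Fin.last n)).2
          rwa [Fin.succ_last, hl] at this
        · obtain ⟨i, rfl⟩ : ∃ i : Fin (n+1), j = i.succ := ⟨j.pred hj0, (Fin.succ_pred j hj0).symm⟩
          obtain ⟨k, hk⟩ : ∃ k : Fin (n+1), i.succ = k.castSucc :=
            ⟨(i.succ).castPred hjl, (Fin.castSucc_castPred _ hjl).symm⟩
          constructor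
          · rw [hk, cHi_castSucc n E C k (hk ▸ hj0)]
            exact (hs k).1
          · rw [cLo_succ n E C i hjl]
            exact (hs i).2
    · intro h
      have h0 : D 0 = ∅ := by
        have := (h 0).1
        rwa [cHi_zero, Finset.subset_empty] at this
      have hl : D (Fin.last (n+1)) = E := by
        apply Finset.Subset.antisymm
        · have := (h (Fin.last (n+1))).1
          rwa [cHi_last] at this
        · have := (h (Fin.last (n+1))).2
          rw [cLo_last] at this
          exact (Finset.subset_union_right).trans this
      have hs : ∀ i : Fin (n+1), D i.castSucc ⊆ C i ∧ C i ⊆ D i.succ := by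
        intro i
        constructor
        · by_cases hi0 : i = 0
          · subst hi0
            rw [show (0 : Fin (n+1)).castSucc = 0 from rfl, h0]
            exact Finset.empty_subset _
          · have hcs0 : i.castSucc ≠ 0 := by
              rw [ne_eq, Fin.castSucc_eq_zero_iff]; exact hi0
            have := (h i.castSucc).1
            rwa [cHi_castSucc n E C i hcs0] at this
        · by_cases hil : i.succ = Fin.last (n+1)
          · have hi' : i = Fin.last n :=
              Fin.succ_injective _ (hil.trans (Fin.succ_last n).symm)
            subst hi'
            rw [Fin.succ_last]
            have := (h (Fin.last (n+1))).2
            rw [cLo_last] at this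
            exact (Finset.subset_union_left).trans this
          · have := (h i.succ).2
            rwa [cLo_succ n E C i hil] at this
      exact ⟨⟨h0, hl, fun i => (hs i).1.trans (hs i).2⟩, hs⟩
  have hset : Finset.univ.filter (fun D : Fin (n+2) → Finset α =>
        (D 0 = ∅ ∧ D (Fin.last (n+1)) = E ∧ ∀ i : Fin (n+1), D i.castSucc ⊆ D i.succ) ∧
        (∀ i : Fin (n+1), D i.castSucc ⊆ C i ∧ C i ⊆ D i.succ))
      = Fintype.piFinset (fun j => ((cHi n E C j).powerset.filter (fun X => cLo n E C j ⊆ X))) := by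
    ext D
    simp only [Finset.mem_filter, Finset.mem_univ, true_and, Fintype.mem_piFinset,
      Finset.mem_powerset]
    rw [hmem D]
  rw [hset]
  have hprod : ∀ D : Fin (n+2) → Finset α,
      ∏ i : Fin (n+1), ((-1:R))^(D i.castSucc).card = ∏ j : Fin (n+2), cv n R j (D j) := by
    intro D
    rw [Fin.prod_univ_castSucc (f := fun j => cv n R j (D j))]
    rw [cv_last, mul_one]
    apply Finset.prod_congr rfl
    intro i _
    rw [cv_castSucc]
  rw [Finset.sum_congr rfl (fun D _ => hprod D), ← Finset.prod_univ_sum]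
  have hg0 : ∑ X ∈ (cHi n E C 0).powerset.filter (fun X => cLo n E C 0 ⊆ X), cv n R 0 X = 1 := by
    rw [cHi_zero, cLo_zero]
    rw [show ((0:Fin (n+2)) = (0 : Fin (n+1)).castSucc) from rfl]
    rw [Finset.sum_congr rfl (fun X _ => cv_castSucc n (0 : Fin (n+1)) X)]
    simp
  have hglast : ∑ X ∈ (cHi n E C (Fin.last (n+1))).powerset.filter
        (fun X => cLo n E C (Fin.last (n+1)) ⊆ X), cv n R (Fin.last (n+1)) X
      = if C (Fin.last n) ⊆ E then 1 else 0 := by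
    rw [Finset.sum_congr rfl (fun X _ => cv_last n X), cHi_last, cLo_last]
    rw [Finset.sum_const, nsmul_eq_mul, mul_one]
    by_cases hCE : C (Fin.last n) ⊆ E
    · rw [if_pos hCE]
      have hone : E.powerset.filter (fun X => C (Fin.last n) ∪ E ⊆ X) = {E} := by
        ext X
        simp only [Finset.mem_filter, Finset.mem_powerset, Finset.mem_singleton]
        constructor
        · rintro ⟨h1, h2⟩
          exact Finset.Subset.antisymm h1 ((Finset.subset_union_right).trans h2)
        · rintro rfl
          exact ⟨Finset.Subset.refl _, Finset.union_subset hCE (Finset.Subset.refl _)⟩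
      rw [hone, Finset.card_singleton, Nat.cast_one]
    · rw [if_neg hCE]
      have hnone : E.powerset.filter (fun X => C (Fin.last n) ∪ E ⊆ X) = ∅ := by
        rw [Finset.filter_eq_empty_iff]
        intro X hX
        rw [Finset.mem_powerset] at hX
        intro hsub
        exact hCE (((Finset.subset_union_left).trans hsub).trans hX)
      rw [hnone, Finset.card_empty, Nat.cast_zero]
  have hgint : ∀ i : Fin (n+1), ∀ hi0 : i ≠ 0,
      ∑ X ∈ (cHi n E C i.castSucc).powerset.filter (fun X => cLo n E C i.castSucc ⊆ X),
        cv n R i.castSucc X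
      = if C ((i.pred hi0).castSucc) = C i then (-1)^(C i).card else 0 := by
    intro i hi0
    have hcs0 : i.castSucc ≠ 0 := by rw [ne_eq, Fin.castSucc_eq_zero_iff]; exact hi0
    have hsucc : i.castSucc = ((i.pred hi0).castSucc).succ := by
      rw [Fin.succ_castSucc, Fin.succ_pred]
    have hLol : cLo n E C i.castSucc = C ((i.pred hi0).castSucc) := by
      rw [hsucc, cLo_succ]
      rw [← hsucc]
      exact (Fin.castSucc_lt_last i).ne
    rw [Finset.sum_congr rfl (fun X _ => cv_castSucc n i X), cHi_castSucc n E C i hcs0, hLol,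
      tic_sum_interval_neg_one]
    by_cases h : C ((i.pred hi0).castSucc) = C i
    · rw [if_pos h, if_pos h, h]
    · rw [if_neg h, if_neg h]
  by_cases hconst : ∀ i, C i = C 0
  · by_cases hCE : C 0 ⊆ E
    · rw [if_pos ⟨hconst, hCE⟩]
      have hgj : ∀ j : Fin (n+2),
          ∑ X ∈ (cHi n E C j).powerset.filter (fun X => cLo n E C j ⊆ X), cv n R j X
          = if j = 0 ∨ j = Fin.last (n+1) then 1 else (-1)^(C 0).card := by
        intro j
        by_cases hj0 : j = 0
        · subst hj0; rw [if_pos (Or.inl rfl)]; exact hg0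
        · by_cases hjl : j = Fin.last (n+1)
          · subst hjl
            rw [if_pos (Or.inr rfl), hglast, if_pos ((hconst (Fin.last n)).symm ▸ hCE)]
          · rw [if_neg (by tauto)]
            obtain ⟨k, rfl⟩ : ∃ k : Fin (n+1), j = k.castSucc :=
              ⟨j.castPred hjl, (Fin.castSucc_castPred _ hjl).symm⟩
            have hk0 : k ≠ 0 := by
              intro h; subst h; exact hj0 rfl
            rw [hgint k hk0, if_pos ((hconst _).trans (hconst k).symm), hconst k]
      rw [Finset.prod_congr rfl (fun j _ => hgj j)]
      rw [Finset.prod_ite, Finset.prod_const_one, one_mul, Finset.prod_const]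
      have hfil : Finset.univ.filter (fun j : Fin (n+2) => ¬(j = 0 ∨ j = Fin.last (n+1)))
          = Finset.univ \ {0, Fin.last (n+1)} := by
        ext j; simp [not_or]
      have hcardfil : (Finset.univ.filter
          (fun j : Fin (n+2) => ¬(j = 0 ∨ j = Fin.last (n+1)))).card = n := by
        rw [hfil, Finset.card_sdiff_of_subset (by simp)]
        rw [Finset.card_univ, Fintype.card_fin,
          Finset.card_insert_of_notMem (by simp [Ne.symm (tic_last_ne_zero n)]),
          Finset.card_singleton]
        omega
      rw [hcardfil, ← pow_mul, mul_comm (C 0).card]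
    · rw [if_neg (by tauto)]
      apply Finset.prod_eq_zero (Finset.mem_univ (Fin.last (n+1)))
      rw [hglast, if_neg (fun h => hCE ((hconst (Fin.last n)) ▸ h))]
  · rw [if_neg (by tauto)]
    have hbad : ∃ i : Fin (n+1), ∃ hi0 : i ≠ 0, C ((i.pred hi0).castSucc) ≠ C i := by
      by_contra hc
      push_neg at hc
      apply hconst
      have haux : ∀ m : ℕ, ∀ hm : m < n + 1, C ⟨m, hm⟩ = C 0 := by
        intro m
        induction m with
        | zero => intro hm; rfl
        | succ k ih =>
          intro hm
          have hne : (⟨k+1, hm⟩ : Fin (n+1)) ≠ 0 := by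
            simp [Fin.ext_iff]
          have heq := hc ⟨k+1, hm⟩ hne
          have hpred : (((⟨k+1, hm⟩ : Fin (n+1)).pred hne).castSucc) = ⟨k, by omega⟩ := by
            simp [Fin.ext_iff]
          rw [hpred] at heq
          rw [← heq]
          exact ih (by omega)
      intro i
      have := haux i.val i.isLt
      rwa [Fin.eta] at this
    obtain ⟨i, hi0, hbadi⟩ := hbad
    apply Finset.prod_eq_zero (Finset.mem_univ i.castSucc)
    rw [hgint i hi0, if_neg hbadi]

end Chain

/-! ### Matroid-side lemmas -/

namespace PreMatroid

variable {α : Type*} [DecidableEq α] {R : Type*} [CommRing R]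

lemma minor_tutte (M : PreMatroid α) (A' A : Finset α) (h1 : A' ⊆ A) (x y : R) :
    ((M.restrict A).contract A').tutte (1-x) (1-y)
      = ∑ C ∈ A.powerset.filter (fun C => A' ⊆ C),
          (-x)^((M.rk A - M.rk A') - (M.rk C - M.rk A')) *
          (-y)^((C.card - A'.card) - (M.rk C - M.rk A')) := by
  rw [tutte]
  have hE : ((M.restrict A).contract A').E = A \ A' := rfl
  have hrk : ∀ B, ((M.restrict A).contract A').rk B = M.rk (B ∪ A') - M.rk A' := fun _ => rfl
  have hrank : ((M.restrict A).contract A').rank = M.rk A - M.rk A' := by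
    rw [rank, hE, hrk, Finset.sdiff_union_of_subset h1]
  refine Finset.sum_nbij' (fun B => B ∪ A') (fun C => C \ A') ?_ ?_ ?_ ?_ ?_
  · intro B hB
    rw [hE, Finset.mem_powerset] at hB
    rw [Finset.mem_filter, Finset.mem_powerset]
    exact ⟨Finset.union_subset ((hB.trans (Finset.sdiff_subset))) h1, Finset.subset_union_right⟩
  · intro C hC
    rw [Finset.mem_filter, Finset.mem_powerset] at hC
    rw [hE, Finset.mem_powerset]
    exact Finset.sdiff_subset_sdiff hC.1 (Finset.Subset.refl _)
  · intro B hB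
    rw [hE, Finset.mem_powerset] at hB
    show (B ∪ A') \ A' = B
    rw [Finset.union_sdiff_cancel_right]
    exact Finset.disjoint_left.mpr (fun x hx => (Finset.mem_sdiff.mp (hB hx)).2)
  · intro C hC
    rw [Finset.mem_filter, Finset.mem_powerset] at hC
    show C \ A' ∪ A' = C
    rw [Finset.sdiff_union_of_subset hC.2]
  · intro B hB
    rw [hE, Finset.mem_powerset] at hB
    have hdisj : Disjoint B A' :=
      Finset.disjoint_left.mpr (fun x hx => (Finset.mem_sdiff.mp (hB hx)).2)
    have hcard : ((fun B => B ∪ A') B).card - A'.card = B.card := by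
      show (B ∪ A').card - A'.card = B.card
      rw [Finset.card_union_of_disjoint hdisj]
      omega
    rw [hrank, hrk]
    show ((1-x) - 1) ^ _ * ((1-y) - 1) ^ (B.card - _) = _
    rw [show (1-x) - 1 = -x from by ring, show (1-y) - 1 = -y from by ring, hcard]

omit [DecidableEq α] in
lemma chain_le {n : ℕ} (D : Fin (n+1) → Finset α)
    (hch : ∀ i : Fin n, D i.castSucc ⊆ D i.succ) (j : Fin (n+1)) : D j ⊆ D (Fin.last n) := by
  have key : ∀ m : ℕ, ∀ j : Fin (n+1), j.val + m = n → D j ⊆ D (Fin.last n) := by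
    intro m
    induction m with
    | zero =>
      intro j hj
      have hq : j = Fin.last n := by
        rw [Fin.ext_iff, Fin.val_last]; omega
      rw [hq]
    | succ m ih =>
      intro j hj
      have hjl : j ≠ Fin.last n := by
        rw [ne_eq, Fin.ext_iff, Fin.val_last]; omega
      refine Finset.Subset.trans ?_ (ih ((j.castPred hjl).succ) ?_)
      · have := hch (j.castPred hjl)
        rwa [Fin.castSucc_castPred] at this
      · rw [Fin.val_succ, Fin.coe_castPred]; omega
  exact key (n - j.val) j (by omega)

end PreMatroid

namespace PreMatroid

/-- The iterated convolution formula for the Tutte polynomial, summing over chains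
`∅ = A_0 ⊆ A_1 ⊆ ⋯ ⊆ A_n = E`. -/
theorem tutte_iterated_convolution {α : Type*} [DecidableEq α] [Fintype α]
    {R : Type*} [CommRing R] (M : PreMatroid α) (hM : M.IsMatroid)
    (n : ℕ) (hn : 1 ≤ n) (a b : Fin n → R) :
    M.tutte (1 - ∏ i, a i) (1 - ∏ i, b i) =
      ∑ D ∈ Finset.univ.filter (fun D : Fin (n + 1) → Finset α =>
          D 0 = ∅ ∧ D (Fin.last n) = M.E ∧ ∀ i : Fin n, D i.castSucc ⊆ D i.succ),
        ∏ i : Fin n,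
          a i ^ (M.rank - M.rk (D i.succ)) *
            b i ^ ((D i.castSucc).card - M.rk (D i.castSucc)) *
            ((M.restrict (D i.succ)).contract (D i.castSucc)).tutte (1 - a i) (1 - b i) := by
  obtain ⟨m, rfl⟩ : ∃ m, n = m + 1 := ⟨n - 1, by omega⟩
  obtain ⟨hcard, hmono, hsubm⟩ := hM
  have hrk0 : M.rk ∅ = 0 := Nat.le_zero.mp (by simpa using hcard ∅ (Finset.empty_subset _))
  have hsub' : ∀ A' C : Finset α, A' ⊆ C → C ⊆ M.E →
      M.rk C + A'.card ≤ M.rk A' + C.card := by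
    intro A' C h1 h2
    have h3 := hsubm A' (C \ A') ((h1.trans h2)) ((Finset.sdiff_subset).trans h2)
    rw [Finset.union_sdiff_of_subset h1, Finset.inter_sdiff_self, hrk0, add_zero] at h3
    have h4 : M.rk (C \ A') ≤ (C \ A').card := hcard _ ((Finset.sdiff_subset).trans h2)
    have h5 : (C \ A').card = C.card - A'.card := Finset.card_sdiff_of_subset h1
    have h6 : A'.card ≤ C.card := Finset.card_le_card h1
    omega
  symm
  calc
    ∑ D ∈ Finset.univ.filter (fun D : Fin (m + 1 + 1) → Finset α =>
        D 0 = ∅ ∧ D (Fin.last (m + 1)) = M.E ∧ ∀ i : Fin (m + 1), D i.castSucc ⊆ D i.succ),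
      ∏ i : Fin (m + 1),
        a i ^ (M.rank - M.rk (D i.succ)) *
          b i ^ ((D i.castSucc).card - M.rk (D i.castSucc)) *
          ((M.restrict (D i.succ)).contract (D i.castSucc)).tutte (1 - a i) (1 - b i)
      = ∑ D ∈ Finset.univ.filter (fun D : Fin (m + 1 + 1) → Finset α =>
          D 0 = ∅ ∧ D (Fin.last (m + 1)) = M.E ∧ ∀ i : Fin (m + 1), D i.castSucc ⊆ D i.succ),
        ∑ Cc ∈ Finset.univ.filter (fun Cc : Fin (m+1) → Finset α =>
          ∀ i : Fin (m+1), D i.castSucc ⊆ Cc i ∧ Cc i ⊆ D i.succ),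
          ((-1:R))^M.rank * (∏ i : Fin (m+1), ((-1:R))^(D i.castSucc).card) *
          (∏ i : Fin (m+1), (((-1:R))^((Cc i)).card *
            (a i ^ (M.rank - M.rk (Cc i)) * b i ^ ((Cc i).card - M.rk (Cc i))))) := by
      refine Finset.sum_congr rfl (fun D hD => ?_)
      rw [Finset.mem_filter] at hD
      obtain ⟨-, h0, hl, hch⟩ := hD
      have hDE : ∀ j, D j ⊆ M.E := fun j => hl ▸ chain_le D hch j
      calc
        ∏ i : Fin (m + 1),
            a i ^ (M.rank - M.rk (D i.succ)) *
              b i ^ ((D i.castSucc).card - M.rk (D i.castSucc)) *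
              ((M.restrict (D i.succ)).contract (D i.castSucc)).tutte (1 - a i) (1 - b i)
            = ∏ i : Fin (m + 1),
              ∑ C ∈ (D i.succ).powerset.filter (fun X => D i.castSucc ⊆ X),
                a i ^ (M.rank - M.rk (D i.succ)) *
                b i ^ ((D i.castSucc).card - M.rk (D i.castSucc)) *
                ((-(a i))^((M.rk (D i.succ) - M.rk (D i.castSucc))
                    - (M.rk C - M.rk (D i.castSucc))) *
                 (-(b i))^((C.card - (D i.castSucc).card)
                    - (M.rk C - M.rk (D i.castSucc)))) := by
            refine Finset.prod_congr rfl (fun i _ => ?_)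
            rw [minor_tutte M (D i.castSucc) (D i.succ) (hch i) (a i) (b i), Finset.mul_sum]
        _ = ∑ Cc ∈ Fintype.piFinset
              (fun i : Fin (m+1) => (D i.succ).powerset.filter (fun X => D i.castSucc ⊆ X)),
            ∏ i : Fin (m + 1),
              (a i ^ (M.rank - M.rk (D i.succ)) *
                b i ^ ((D i.castSucc).card - M.rk (D i.castSucc)) *
                ((-(a i))^((M.rk (D i.succ) - M.rk (D i.castSucc))
                    - (M.rk (Cc i) - M.rk (D i.castSucc))) *
                 (-(b i))^(((Cc i).card - (D i.castSucc).card)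
                    - (M.rk (Cc i) - M.rk (D i.castSucc))))) :=
            Finset.prod_univ_sum _ _
        _ = ∑ Cc ∈ Fintype.piFinset
              (fun i : Fin (m+1) => (D i.succ).powerset.filter (fun X => D i.castSucc ⊆ X)),
            ((-1:R))^M.rank * (∏ i : Fin (m+1), ((-1:R))^(D i.castSucc).card) *
            (∏ i : Fin (m+1), (((-1:R))^((Cc i)).card *
              (a i ^ (M.rank - M.rk (Cc i)) * b i ^ ((Cc i).card - M.rk (Cc i))))) := by
            refine Finset.sum_congr rfl (fun Cc hCc => ?_)
            rw [Fintype.mem_piFinset] at hCc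
            calc
              ∏ i : Fin (m + 1),
                  (a i ^ (M.rank - M.rk (D i.succ)) *
                    b i ^ ((D i.castSucc).card - M.rk (D i.castSucc)) *
                    ((-(a i))^((M.rk (D i.succ) - M.rk (D i.castSucc))
                        - (M.rk (Cc i) - M.rk (D i.castSucc))) *
                     (-(b i))^(((Cc i).card - (D i.castSucc).card)
                        - (M.rk (Cc i) - M.rk (D i.castSucc)))))
                  = ∏ i : Fin (m + 1),
                    ((((-1:R))^(M.rk (D i.succ)) * ((-1:R))^(M.rk (D i.castSucc))) *
                      (((-1:R))^((D i.castSucc).card)) *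
                      (((-1:R))^((Cc i).card) *
                        (a i ^ (M.rank - M.rk (Cc i)) *
                          b i ^ ((Cc i).card - M.rk (Cc i))))) := by
                  refine Finset.prod_congr rfl (fun i _ => ?_)
                  have hCi := hCc i
                  rw [Finset.mem_filter, Finset.mem_powerset] at hCi
                  exact tic_key_alg (a i) (b i) M.rank (M.rk (D i.succ)) (M.rk (Cc i))
                    (M.rk (D i.castSucc)) (Cc i).card (D i.castSucc).card
                    (hmono _ _ hCi.2 (hCi.1.trans (hDE _)))
                    (hmono _ _ hCi.1 (hDE _))
                    (hmono _ _ (hDE _) (Finset.Subset.refl _))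
                    (hcard _ (hDE _))
                    (hsub' _ _ hCi.2 (hCi.1.trans (hDE _)))
                    (Finset.card_le_card hCi.2)
              _ = (∏ i : Fin (m + 1),
                      (((-1:R))^(M.rk (D i.succ)) * ((-1:R))^(M.rk (D i.castSucc)))) *
                  (∏ i : Fin (m + 1), ((-1:R))^((D i.castSucc).card)) *
                  (∏ i : Fin (m + 1), (((-1:R))^((Cc i).card) *
                    (a i ^ (M.rank - M.rk (Cc i)) * b i ^ ((Cc i).card - M.rk (Cc i))))) := by
                  rw [Finset.prod_mul_distrib, Finset.prod_mul_distrib]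
              _ = ((-1:R))^M.rank * (∏ i : Fin (m+1), ((-1:R))^(D i.castSucc).card) *
                  (∏ i : Fin (m+1), (((-1:R))^((Cc i)).card *
                    (a i ^ (M.rank - M.rk (Cc i)) *
                      b i ^ ((Cc i).card - M.rk (Cc i))))) := by
                  rw [tic_prod_telescope (fun j => ((-1:R))^(M.rk (D j)))
                    (fun j => by rw [← pow_add, ← two_mul, pow_mul]; simp)]
                  rw [h0, hl, hrk0, pow_zero, mul_one,
                    show M.rk M.E = M.rank from rfl]
        _ = ∑ Cc ∈ Finset.univ.filter (fun Cc : Fin (m+1) → Finset α =>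
              ∀ i : Fin (m+1), D i.castSucc ⊆ Cc i ∧ Cc i ⊆ D i.succ),
            ((-1:R))^M.rank * (∏ i : Fin (m+1), ((-1:R))^(D i.castSucc).card) *
            (∏ i : Fin (m+1), (((-1:R))^((Cc i)).card *
              (a i ^ (M.rank - M.rk (Cc i)) * b i ^ ((Cc i).card - M.rk (Cc i))))) := by
            refine Finset.sum_congr ?_ (fun _ _ => rfl)
            ext Cc
            simp only [Fintype.mem_piFinset, Finset.mem_filter, Finset.mem_univ, true_and,
              Finset.mem_powerset]
            exact forall_congr' (fun i => and_comm)
    _ = ∑ Cc ∈ (Finset.univ : Finset (Fin (m+1) → Finset α)),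
          ∑ D ∈ Finset.univ.filter (fun D : Fin (m + 1 + 1) → Finset α =>
            (D 0 = ∅ ∧ D (Fin.last (m + 1)) = M.E ∧
              ∀ i : Fin (m + 1), D i.castSucc ⊆ D i.succ) ∧
            (∀ i : Fin (m+1), D i.castSucc ⊆ Cc i ∧ Cc i ⊆ D i.succ)),
          ((-1:R))^M.rank * (∏ i : Fin (m+1), ((-1:R))^(D i.castSucc).card) *
          (∏ i : Fin (m+1), (((-1:R))^((Cc i)).card *
            (a i ^ (M.rank - M.rk (Cc i)) * b i ^ ((Cc i).card - M.rk (Cc i))))) := by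
        rw [Finset.sum_filter]
        have hsw : ∀ D : Fin (m + 1 + 1) → Finset α,
            (if (D 0 = ∅ ∧ D (Fin.last (m + 1)) = M.E ∧
                ∀ i : Fin (m + 1), D i.castSucc ⊆ D i.succ) then
              (∑ Cc ∈ Finset.univ.filter (fun Cc : Fin (m+1) → Finset α =>
                ∀ i : Fin (m+1), D i.castSucc ⊆ Cc i ∧ Cc i ⊆ D i.succ),
                ((-1:R))^M.rank * (∏ i : Fin (m+1), ((-1:R))^(D i.castSucc).card) *
                (∏ i : Fin (m+1), (((-1:R))^((Cc i)).card *
                  (a i ^ (M.rank - M.rk (Cc i)) * b i ^ ((Cc i).card - M.rk (Cc i))))))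
            else 0)
            = ∑ Cc ∈ (Finset.univ : Finset (Fin (m+1) → Finset α)),
              (if ((D 0 = ∅ ∧ D (Fin.last (m + 1)) = M.E ∧
                  ∀ i : Fin (m + 1), D i.castSucc ⊆ D i.succ) ∧
                  (∀ i : Fin (m+1), D i.castSucc ⊆ Cc i ∧ Cc i ⊆ D i.succ)) then
                ((-1:R))^M.rank * (∏ i : Fin (m+1), ((-1:R))^(D i.castSucc).card) *
                (∏ i : Fin (m+1), (((-1:R))^((Cc i)).card *
                  (a i ^ (M.rank - M.rk (Cc i)) * b i ^ ((Cc i).card - M.rk (Cc i)))))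
              else 0) := by
          intro D
          by_cases hP : D 0 = ∅ ∧ D (Fin.last (m + 1)) = M.E ∧
              ∀ i : Fin (m + 1), D i.castSucc ⊆ D i.succ
          · rw [if_pos hP, Finset.sum_filter]
            refine Finset.sum_congr rfl (fun Cc _ => ?_)
            by_cases hQ : ∀ i : Fin (m+1), D i.castSucc ⊆ Cc i ∧ Cc i ⊆ D i.succ
            · rw [if_pos hQ, if_pos ⟨hP, hQ⟩]
            · rw [if_neg hQ, if_neg (fun h => hQ h.2)]
          · rw [if_neg hP]
            symm
            apply Finset.sum_eq_zero
            intro Cc _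
            rw [if_neg (fun h => hP h.1)]
        rw [Finset.sum_congr rfl (fun D _ => hsw D), Finset.sum_comm]
        exact Finset.sum_congr rfl (fun Cc _ => (Finset.sum_filter _ _).symm)
    _ = ∑ Cc ∈ (Finset.univ : Finset (Fin (m+1) → Finset α)),
          (((-1:R))^M.rank *
            (∏ i : Fin (m+1), (((-1:R))^((Cc i)).card *
              (a i ^ (M.rank - M.rk (Cc i)) * b i ^ ((Cc i).card - M.rk (Cc i)))))) *
          (if (∀ i, Cc i = Cc 0) ∧ Cc 0 ⊆ M.E then ((-1:R))^(m * (Cc 0).card) else 0) := by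
        refine Finset.sum_congr rfl (fun Cc _ => ?_)
        have hre : ∀ D : Fin (m + 1 + 1) → Finset α,
            ((-1:R))^M.rank * (∏ i : Fin (m+1), ((-1:R))^(D i.castSucc).card) *
            (∏ i : Fin (m+1), (((-1:R))^((Cc i)).card *
              (a i ^ (M.rank - M.rk (Cc i)) * b i ^ ((Cc i).card - M.rk (Cc i)))))
            = (((-1:R))^M.rank *
                (∏ i : Fin (m+1), (((-1:R))^((Cc i)).card *
                  (a i ^ (M.rank - M.rk (Cc i)) * b i ^ ((Cc i).card - M.rk (Cc i)))))) *
              (∏ i : Fin (m+1), ((-1:R))^(D i.castSucc).card) := fun D => by ring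
        rw [Finset.sum_congr rfl (fun D _ => hre D), ← Finset.mul_sum,
          tic_chain_count m M.E Cc]
    _ = ∑ Cc ∈ Finset.univ.filter (fun Cc : Fin (m+1) → Finset α =>
            (∀ i, Cc i = Cc 0) ∧ Cc 0 ⊆ M.E),
          (((-1:R))^M.rank *
            (∏ i : Fin (m+1), (((-1:R))^((Cc i)).card *
              (a i ^ (M.rank - M.rk (Cc i)) * b i ^ ((Cc i).card - M.rk (Cc i)))))) *
          ((-1:R))^(m * (Cc 0).card) := by
        rw [Finset.sum_filter]
        refine Finset.sum_congr rfl (fun Cc _ => ?_)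
        rw [mul_ite, mul_zero]
    _ = ∑ B ∈ M.E.powerset,
          ((-1:R))^M.rank * ((((-1:R))^(B.card))^(m+1) *
            ((∏ i, a i)^(M.rank - M.rk B) * (∏ i, b i)^(B.card - M.rk B))) *
          ((-1:R))^(m * B.card) := by
        refine Finset.sum_nbij' (fun Cc => Cc 0) (fun B => fun _ => B) ?_ ?_ ?_ ?_ ?_
        · intro Cc hCc
          rw [Finset.mem_filter] at hCc
          exact Finset.mem_powerset.mpr hCc.2.2
        · intro B hB
          rw [Finset.mem_filter]
          exact ⟨Finset.mem_univ _, fun i => rfl, Finset.mem_powerset.mp hB⟩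
        · intro Cc hCc
          rw [Finset.mem_filter] at hCc
          funext i
          exact (hCc.2.1 i).symm
        · intro B _
          rfl
        · intro Cc hCc
          rw [Finset.mem_filter] at hCc
          obtain ⟨-, hcst, hCE⟩ := hCc
          have hH : (∏ i : Fin (m+1), (((-1:R))^((Cc i)).card *
                (a i ^ (M.rank - M.rk (Cc i)) * b i ^ ((Cc i).card - M.rk (Cc i)))))
              = (((-1:R))^((Cc 0).card))^(m+1) *
                ((∏ i, a i)^(M.rank - M.rk (Cc 0)) *
                  (∏ i, b i)^((Cc 0).card - M.rk (Cc 0))) := by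
            have h1 : ∀ i : Fin (m+1), (((-1:R))^((Cc i)).card *
                  (a i ^ (M.rank - M.rk (Cc i)) * b i ^ ((Cc i).card - M.rk (Cc i))))
                = ((-1:R))^((Cc 0).card) *
                  (a i ^ (M.rank - M.rk (Cc 0)) * b i ^ ((Cc 0).card - M.rk (Cc 0))) := by
              intro i; rw [hcst i]
            rw [Finset.prod_congr rfl (fun i _ => h1 i), Finset.prod_mul_distrib,
              Finset.prod_const, Finset.card_univ, Fintype.card_fin,
              Finset.prod_mul_distrib, Finset.prod_pow, Finset.prod_pow]
          rw [hH, mul_assoc]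
    _ = ∑ B ∈ M.E.powerset,
          (-(∏ i, a i))^(M.rank - M.rk B) * (-(∏ i, b i))^(B.card - M.rk B) := by
        refine Finset.sum_congr rfl (fun B hB => ?_)
        rw [Finset.mem_powerset] at hB
        exact tic_final_alg (∏ i, a i) (∏ i, b i) M.rank (M.rk B) B.card m
          (hmono B M.E hB (Finset.Subset.refl _)) (hcard B hB)
    _ = M.tutte (1 - ∏ i, a i) (1 - ∏ i, b i) := by
        rw [tutte]
        refine Finset.sum_congr rfl (fun B _ => ?_)
        rw [show (1 - ∏ i, a i) - 1 = -(∏ i, a i) from by ring,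
          show (1 - ∏ i, b i) - 1 = -(∏ i, b i) from by ring]

end PreMatroid
end

section
/- Let M be a finite matroid on ground set E and let x,y be elements of a commutative ring R. Then 𝔗_M(x², y²) = Σ_{A⊆E} (1−x)^{rk(M)−rk(A)} · (1+y)^{|A|−rk(A)} · 𝔗_{M|A}(x,y) · 𝔗_{M/A}(−x,−y). -/
open Finset

namespace PreMatroid

variable {α : Type*} [DecidableEq α] {R : Type*} [CommRing R]

private lemma key_term {R : Type*} [CommRing R] (x y : R) (r rA rB rF cA cB cC : ℕ)
    (h1 : rB ≤ rA) (h2 : rA ≤ rF) (h3 : rF ≤ r) (h4 : rF ≤ rA + cC) (h5 : rA ≤ cA) :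
    (1 - x) ^ (r - rA) * (1 + y) ^ (cA - rA) *
      ((x - 1) ^ (rA - rB) * (y - 1) ^ (cB - rB)) *
      ((-x - 1) ^ ((r - rA) - (rF - rA)) * (-y - 1) ^ (cC - (rF - rA))) =
    (-1) ^ cC * ((x - 1) ^ (r - rB) * (y - 1) ^ (cB - rB)) *
      ((x + 1) ^ (r - rF) * (1 + y) ^ ((cA + cC) - rF)) := by
  have e2 : (r - rA) - (rF - rA) = r - rF := by omega
  have e1 : r - rB = (r - rA) + (rA - rB) := by omega
  have e3 : (cA + cC) - rF = (cA - rA) + (cC - (rF - rA)) := by omega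
  have e4 : (r - rA) + ((r - rF) + (cC - (rF - rA))) = 2 * (r - rF) + cC := by omega
  have hs : ((-1 : R)) ^ (r - rA) * ((-1) ^ (r - rF) * (-1) ^ (cC - (rF - rA))) =
      (-1) ^ cC := by
    rw [← pow_add, ← pow_add, e4, pow_add, pow_mul]
    simp
  rw [e1, e2, e3, ← hs,
    show (1 - x) = -(x - 1) from by ring,
    show (-x - 1) = -(x + 1) from by ring,
    show (-y - 1) = -((1 : R) + y) from by ring,
    neg_pow (x - 1), neg_pow (x + 1), neg_pow ((1 : R) + y)]
  ring

private lemma neg_one_pow_sum {α : Type*} [DecidableEq α] {R : Type*} [CommRing R]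
    (s : Finset α) :
    ∑ C ∈ s.powerset, ((-1 : R)) ^ C.card = if s = ∅ then 1 else 0 := by
  have h := Finset.sum_powerset_neg_one_pow_card (x := s)
  have : ∑ C ∈ s.powerset, ((-1 : R)) ^ C.card
      = ((∑ C ∈ s.powerset, (-1 : ℤ) ^ C.card : ℤ) : R) := by
    push_cast
    rfl
  rw [this, h]
  split <;> simp

/-- The "square" convolution formula
`𝔗_M(x²,y²) = Σ_{A⊆E} (1−x)^{rk M − rk A} (1+y)^{|A|−rk A} 𝔗_{M|A}(x,y) 𝔗_{M/A}(−x,−y)`. -/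
theorem tutte_convolution_square (M : PreMatroid α) (hM : M.IsMatroid) (x y : R) :
    M.tutte (x ^ 2) (y ^ 2) =
      ∑ A ∈ M.E.powerset,
        (1 - x) ^ (M.rank - M.rk A) * (1 + y) ^ (A.card - M.rk A) *
          (M.restrict A).tutte x y * (M.contract A).tutte (-x) (-y) := by
  classical
  obtain ⟨hcard, hmono, hsub⟩ := hM
  set g : Finset α → R := fun B =>
    (x - 1) ^ (M.rk M.E - M.rk B) * (y - 1) ^ (B.card - M.rk B) with hg
  set h : Finset α → R := fun F =>
    (x + 1) ^ (M.rk M.E - M.rk F) * (1 + y) ^ (F.card - M.rk F) with hh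
  -- Step 1 : expand each summand of the RHS as a double sum
  have step1 : ∀ A ∈ M.E.powerset,
      (1 - x) ^ (M.rank - M.rk A) * (1 + y) ^ (A.card - M.rk A) *
        (M.restrict A).tutte x y * (M.contract A).tutte (-x) (-y)
      = ∑ B ∈ A.powerset, ∑ C ∈ (M.E \ A).powerset,
          (-1 : R) ^ C.card * g B * h (A ∪ C) := by
    intro A hA
    rw [Finset.mem_powerset] at hA
    have hres : (M.restrict A).tutte x y
        = ∑ B ∈ A.powerset, (x - 1) ^ (M.rk A - M.rk B) * (y - 1) ^ (B.card - M.rk B) := rfl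
    have hcon : (M.contract A).tutte (-x) (-y)
        = ∑ C ∈ (M.E \ A).powerset,
            (-x - 1) ^ ((M.rk (M.E \ A ∪ A) - M.rk A) - (M.rk (C ∪ A) - M.rk A)) *
            (-y - 1) ^ (C.card - (M.rk (C ∪ A) - M.rk A)) := rfl
    rw [hres, hcon, Finset.sdiff_union_of_subset hA]
    rw [mul_assoc, Finset.sum_mul_sum, Finset.mul_sum]
    refine Finset.sum_congr rfl fun B hB => ?_
    rw [Finset.mul_sum]
    refine Finset.sum_congr rfl fun C hC => ?_
    rw [Finset.mem_powerset] at hB hC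
    have hCE : C ⊆ M.E := hC.trans (Finset.sdiff_subset)
    have hdisj : Disjoint A C :=
      (Finset.disjoint_of_subset_left hC Finset.sdiff_disjoint).symm
    have hACE : A ∪ C ⊆ M.E := Finset.union_subset hA hCE
    have h1 : M.rk B ≤ M.rk A := hmono B A hB hA
    have h2 : M.rk A ≤ M.rk (A ∪ C) := hmono A (A ∪ C) Finset.subset_union_left hACE
    have h3 : M.rk (A ∪ C) ≤ M.rk M.E := hmono (A ∪ C) M.E hACE (le_refl _)
    have h4 : M.rk (A ∪ C) ≤ M.rk A + C.card := by
      have hs := hsub A C hA hCE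
      have hc := hcard C hCE
      omega
    have h5 : M.rk A ≤ A.card := hcard A hA
    have hcardU : (A ∪ C).card = A.card + C.card := Finset.card_union_of_disjoint hdisj
    have hrank : M.rank = M.rk M.E := rfl
    rw [union_comm C A]
    have := key_term x y (M.rk M.E) (M.rk A) (M.rk B) (M.rk (A ∪ C)) A.card B.card C.card
      h1 h2 h3 h4 h5
    rw [hrank, hg, hh]
    simp only
    rw [hcardU]
    linear_combination this
  rw [Finset.sum_congr rfl step1]
  -- Step 2 : swap the two outer sums
  have step2 :
      ∑ A ∈ M.E.powerset, ∑ B ∈ A.powerset,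
          (∑ C ∈ (M.E \ A).powerset, (-1 : R) ^ C.card * g B * h (A ∪ C))
      = ∑ B ∈ M.E.powerset, ∑ A ∈ M.E.powerset.filter (fun A => B ⊆ A),
          (∑ C ∈ (M.E \ A).powerset, (-1 : R) ^ C.card * g B * h (A ∪ C)) := by
    refine Finset.sum_comm' fun A B => ?_
    simp only [Finset.mem_powerset, Finset.mem_filter]
    constructor
    · rintro ⟨h1, h2⟩; exact ⟨⟨h1, h2⟩, h2.trans h1⟩
    · rintro ⟨⟨h1, h2⟩, h3⟩; exact ⟨h1, h2⟩
  rw [step2]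
  -- Step 3 : for a fixed B, the inner double sum collapses to h B
  have step3 : ∀ B ∈ M.E.powerset,
      ∑ A ∈ M.E.powerset.filter (fun A => B ⊆ A),
          (∑ C ∈ (M.E \ A).powerset, (-1 : R) ^ C.card * h (A ∪ C)) = h B := by
    intro B hB
    rw [Finset.mem_powerset] at hB
    set r₁ : Finset (Finset α × Finset α) :=
      (M.E.powerset ×ˢ M.E.powerset).filter (fun p => B ⊆ p.1 ∧ p.2 ⊆ M.E \ p.1) with hr₁
    set r₂ : Finset (Finset α × Finset α) :=
      (M.E.powerset ×ˢ M.E.powerset).filter (fun p => B ⊆ p.1 ∧ p.2 ⊆ p.1 \ B) with hr₂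
    have hmem1 : ∀ p : Finset α × Finset α,
        p ∈ r₁ ↔ p.1 ∈ M.E.powerset.filter (fun A => B ⊆ A) ∧ p.2 ∈ (M.E \ p.1).powerset := by
      intro p
      simp only [hr₁, Finset.mem_filter, Finset.mem_product, Finset.mem_powerset]
      constructor
      · rintro ⟨⟨u1, u2⟩, v1, v2⟩; exact ⟨⟨u1, v1⟩, v2⟩
      · rintro ⟨⟨u1, v1⟩, v2⟩
        exact ⟨⟨u1, v2.trans Finset.sdiff_subset⟩, v1, v2⟩
    have hmem2 : ∀ p : Finset α × Finset α,
        p ∈ r₂ ↔ p.1 ∈ M.E.powerset.filter (fun A => B ⊆ A) ∧ p.2 ∈ (p.1 \ B).powerset := by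
      intro p
      simp only [hr₂, Finset.mem_filter, Finset.mem_product, Finset.mem_powerset]
      constructor
      · rintro ⟨⟨u1, u2⟩, v1, v2⟩; exact ⟨⟨u1, v1⟩, v2⟩
      · rintro ⟨⟨u1, v1⟩, v2⟩
        exact ⟨⟨u1, (v2.trans Finset.sdiff_subset).trans u1⟩, v1, v2⟩
    have e1 : ∑ A ∈ M.E.powerset.filter (fun A => B ⊆ A),
          (∑ C ∈ (M.E \ A).powerset, (-1 : R) ^ C.card * h (A ∪ C))
        = ∑ p ∈ r₁, (-1 : R) ^ p.2.card * h (p.1 ∪ p.2) :=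
      (Finset.sum_finset_product' r₁ _ _ hmem1 (f := fun A C => (-1 : R) ^ C.card * h (A ∪ C))).symm
    have e2 : ∑ p ∈ r₂, (-1 : R) ^ p.2.card * h p.1
        = ∑ F ∈ M.E.powerset.filter (fun A => B ⊆ A),
            ∑ C ∈ (F \ B).powerset, (-1 : R) ^ C.card * h F :=
      Finset.sum_finset_product' r₂ _ _ hmem2 (f := fun F C => (-1 : R) ^ C.card * h F)
    have ebij : ∑ p ∈ r₁, (-1 : R) ^ p.2.card * h (p.1 ∪ p.2)
        = ∑ p ∈ r₂, (-1 : R) ^ p.2.card * h p.1 := by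
      refine Finset.sum_nbij' (fun p => (p.1 ∪ p.2, p.2)) (fun p => (p.1 \ p.2, p.2))
        ?_ ?_ ?_ ?_ ?_
      · rintro ⟨A, C⟩ hp
        obtain ⟨hA', hC⟩ := (hmem1 _).1 hp
        rw [Finset.mem_filter, Finset.mem_powerset] at hA'
        obtain ⟨hA, hBA⟩ := hA'
        rw [Finset.mem_powerset] at hC
        refine (hmem2 _).2 ⟨?_, ?_⟩
        · rw [Finset.mem_filter, Finset.mem_powerset]
          exact ⟨Finset.union_subset hA (hC.trans Finset.sdiff_subset),
            hBA.trans Finset.subset_union_left⟩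
        · rw [Finset.mem_powerset]
          intro c hc
          have hc' := hC hc
          rw [Finset.mem_sdiff] at hc'
          rw [Finset.mem_sdiff]
          exact ⟨Finset.mem_union_right _ hc, fun hcB => hc'.2 (hBA hcB)⟩
      · rintro ⟨F, C⟩ hp
        obtain ⟨hF', hC⟩ := (hmem2 _).1 hp
        rw [Finset.mem_filter, Finset.mem_powerset] at hF'
        obtain ⟨hF, hBF⟩ := hF'
        rw [Finset.mem_powerset] at hC
        refine (hmem1 _).2 ⟨?_, ?_⟩
        · rw [Finset.mem_filter, Finset.mem_powerset]
          refine ⟨(Finset.sdiff_subset).trans hF, ?_⟩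
          intro b hb
          rw [Finset.mem_sdiff]
          refine ⟨hBF hb, fun hbC => ?_⟩
          have := hC hbC
          rw [Finset.mem_sdiff] at this
          exact this.2 hb
        · rw [Finset.mem_powerset]
          intro c hc
          have hc' := hC hc
          rw [Finset.mem_sdiff] at hc' ⊢
          refine ⟨hF hc'.1, ?_⟩
          rw [Finset.mem_sdiff]
          rintro ⟨-, hcC⟩
          exact hcC hc
      · rintro ⟨A, C⟩ hp
        obtain ⟨hA', hC⟩ := (hmem1 _).1 hp
        rw [Finset.mem_filter, Finset.mem_powerset] at hA'
        obtain ⟨hA, hBA⟩ := hA'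
        rw [Finset.mem_powerset] at hC
        have : (A ∪ C) \ C = A := by
          ext a
          simp only [Finset.mem_sdiff, Finset.mem_union]
          constructor
          · rintro ⟨h1 | h1, h2⟩
            · exact h1
            · exact absurd h1 h2
          · intro ha
            refine ⟨Or.inl ha, fun haC => ?_⟩
            have := hC haC
            rw [Finset.mem_sdiff] at this
            exact this.2 ha
        simp [this]
      · rintro ⟨F, C⟩ hp
        obtain ⟨hF', hC⟩ := (hmem2 _).1 hp
        rw [Finset.mem_powerset] at hC
        have : F \ C ∪ C = F :=
          Finset.sdiff_union_of_subset (hC.trans Finset.sdiff_subset)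
        simp [this]
      · rintro ⟨A, C⟩ hp
        rfl
    rw [e1, ebij, e2]
    have e3 : ∀ F ∈ M.E.powerset.filter (fun A => B ⊆ A),
        ∑ C ∈ (F \ B).powerset, (-1 : R) ^ C.card * h F
          = (if F \ B = ∅ then (1 : R) else 0) * h F := by
      intro F hF
      rw [← Finset.sum_mul, neg_one_pow_sum]
    rw [Finset.sum_congr rfl e3]
    rw [Finset.sum_eq_single B]
    · simp
    · intro F hF hFB
      rw [Finset.mem_filter, Finset.mem_powerset] at hF
      have : F \ B ≠ ∅ := by
        intro hFB'
        exact hFB (Finset.Subset.antisymm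
          (by
            intro a ha
            by_contra haB
            have : a ∈ F \ B := Finset.mem_sdiff.2 ⟨ha, haB⟩
            simp [hFB'] at this) hF.2)
      rw [if_neg this, zero_mul]
    · intro hB'
      exfalso
      exact hB' (Finset.mem_filter.2 ⟨Finset.mem_powerset.2 hB, Finset.Subset.refl B⟩)
  -- Put everything together
  have step4 : ∑ B ∈ M.E.powerset, ∑ A ∈ M.E.powerset.filter (fun A => B ⊆ A),
        (∑ C ∈ (M.E \ A).powerset, (-1 : R) ^ C.card * g B * h (A ∪ C))
      = ∑ B ∈ M.E.powerset, g B * h B := by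
    refine Finset.sum_congr rfl fun B hB => ?_
    calc ∑ A ∈ M.E.powerset.filter (fun A => B ⊆ A),
          (∑ C ∈ (M.E \ A).powerset, (-1 : R) ^ C.card * g B * h (A ∪ C))
        = g B * ∑ A ∈ M.E.powerset.filter (fun A => B ⊆ A),
            (∑ C ∈ (M.E \ A).powerset, (-1 : R) ^ C.card * h (A ∪ C)) := by
          rw [Finset.mul_sum]
          refine Finset.sum_congr rfl fun A hA => ?_
          rw [Finset.mul_sum]
          refine Finset.sum_congr rfl fun C hC => ?_
          ring
      _ = g B * h B := by rw [step3 B hB]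
  rw [step4]
  unfold tutte
  refine Finset.sum_congr rfl fun B hB => ?_
  rw [Finset.mem_powerset] at hB
  have hrank : M.rank = M.rk M.E := rfl
  rw [hrank, hg, hh]
  simp only
  rw [show x ^ 2 - 1 = (x - 1) * (x + 1) from by ring,
    show y ^ 2 - 1 = (y - 1) * (1 + y) from by ring, mul_pow, mul_pow]
  ring

end PreMatroid
end

section
/- Let R be a commutative ring and let N1, N2 be norms on finite matroids with values in R. For a finite matroid M define the Tutte character T_{N1,N2}(M) = Σ_{A⊆E(M)} N1(M|A) · N2(M/A). Then for every finite matroid M and every e ∈ E(M) one has the deletion–contraction recurrence: T_{N1,N2}(M) = N1(M|{e}) · T_{N1,N2}(M/e) + N2(M/(E(M)∖{e})) · T_{N1,N2}(M∖e). -/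
open Finset

namespace PreMatroid

/-- A norm on finite matroids with values in a commutative ring `R`:
it takes the value `1` on the empty matroid, and satisfies
`N(X) = N(X|A) · N(X/A)` for every finite matroid `X` and every `A ⊆ E(X)`. -/
def IsNorm {α : Type*} [DecidableEq α] {R : Type*} [CommRing R]
    (N : PreMatroid α → R) : Prop :=
  (∀ M : PreMatroid α, M.IsMatroid → M.E = ∅ → N M = 1) ∧
  (∀ M : PreMatroid α, M.IsMatroid → ∀ A ⊆ M.E,
      N M = N (M.restrict A) * N (M.contract A))

/-- The Tutte character `T_{N1,N2}(M) = Σ_{A⊆E} N1(M|A) · N2(M/A)`. -/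
def tutteChar {α : Type*} [DecidableEq α] {R : Type*} [CommRing R]
    (N1 N2 : PreMatroid α → R) (M : PreMatroid α) : R :=
  ∑ A ∈ M.E.powerset, N1 (M.restrict A) * N2 (M.contract A)

lemma isMatroid_restrict_aux {α : Type*} [DecidableEq α] {M : PreMatroid α}
    (hM : M.IsMatroid) {A : Finset α} (hA : A ⊆ M.E) : (M.restrict A).IsMatroid := by
  obtain ⟨h1, h2, h3⟩ := hM
  exact ⟨fun X hX => h1 X (hX.trans hA),
    fun X Y hXY hY => h2 X Y hXY (hY.trans hA),
    fun X Y hX hY => h3 X Y (hX.trans hA) (hY.trans hA)⟩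

lemma isMatroid_contract_aux {α : Type*} [DecidableEq α] {M : PreMatroid α}
    (hM : M.IsMatroid) {A : Finset α} (hA : A ⊆ M.E) : (M.contract A).IsMatroid := by
  obtain ⟨h1, h2, h3⟩ := hM
  have hrkA : ∀ X : Finset α, X ⊆ M.E → M.rk A ≤ M.rk (X ∪ A) :=
    fun X hX => h2 A (X ∪ A) Finset.subset_union_right (Finset.union_subset hX hA)
  refine ⟨?_, ?_, ?_⟩
  · intro X hX
    have hXE : X ⊆ M.E := hX.trans (Finset.sdiff_subset)
    have hsub := h3 X A hXE hA
    have hXA : X ∩ A = ∅ := by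
      ext x; simp only [Finset.mem_inter, Finset.notMem_empty, iff_false]
      rintro ⟨hx1, hx2⟩
      exact (Finset.mem_sdiff.mp (hX hx1)).2 hx2
    have h0 : M.rk ∅ = 0 := Nat.le_zero.mp (by simpa using h1 ∅ (Finset.empty_subset _))
    rw [hXA, h0] at hsub
    have := h1 X hXE
    simp only [contract]
    omega
  · intro X Y hXY hY
    have hYE : Y ⊆ M.E := hY.trans (Finset.sdiff_subset)
    have := h2 (X ∪ A) (Y ∪ A) (Finset.union_subset_union_left hXY)
      (Finset.union_subset hYE hA)
    simp only [contract]
    omega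
  · intro X Y hX hY
    have hXE : X ⊆ M.E := hX.trans (Finset.sdiff_subset)
    have hYE : Y ⊆ M.E := hY.trans (Finset.sdiff_subset)
    have hsub := h3 (X ∪ A) (Y ∪ A) (Finset.union_subset hXE hA)
      (Finset.union_subset hYE hA)
    have e1 : (X ∪ A) ∪ (Y ∪ A) = (X ∪ Y) ∪ A := by
      ext x; simp only [Finset.mem_union]; tauto
    have e2 : (X ∪ A) ∩ (Y ∪ A) = (X ∩ Y) ∪ A := by
      ext x; simp only [Finset.mem_union, Finset.mem_inter]; tauto
    rw [e1, e2] at hsub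
    have hx := hrkA X hXE
    have hy := hrkA Y hYE
    have hxy := hrkA (X ∪ Y) (Finset.union_subset hXE hYE)
    have hxiy := hrkA (X ∩ Y) ((Finset.inter_subset_left).trans hXE)
    simp only [contract]
    omega

/-- Deletion–contraction recurrence for Tutte characters. -/
theorem tutteChar_deletion_contraction {α : Type*} [DecidableEq α] {R : Type*} [CommRing R]
    (N1 N2 : PreMatroid α → R) (hN1 : IsNorm N1) (hN2 : IsNorm N2)
    (M : PreMatroid α) (hM : M.IsMatroid) (e : α) (he : e ∈ M.E) :
    tutteChar N1 N2 M =
      N1 (M.restrict {e}) * tutteChar N1 N2 (M.contract {e}) +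
        N2 (M.contract (M.E \ {e})) * tutteChar N1 N2 (M.delete {e}) := by
  obtain ⟨h1, h2, h3⟩ := id hM
  have hes : e ∉ M.E \ {e} := by simp
  have hEi : M.E = insert e (M.E \ {e}) := by
    rw [← Finset.erase_eq, Finset.insert_erase he]
  rw [tutteChar]
  conv_lhs => rw [hEi]
  rw [Finset.sum_powerset_insert hes]
  have hdel : ∀ A ∈ (M.E \ {e}).powerset,
      N1 (M.restrict A) * N2 (M.contract A) =
        N2 (M.contract (M.E \ {e})) * (N1 ((M.delete {e}).restrict A) *
          N2 ((M.delete {e}).contract A)) := by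
    intro A hA
    rw [Finset.mem_powerset] at hA
    have hAE : A ⊆ M.E := hA.trans Finset.sdiff_subset
    have heA : e ∉ A := fun h => (Finset.mem_sdiff.mp (hA h)).2 (Finset.mem_singleton_self e)
    -- apply the norm axiom for N2 to M/A with subset S = (E\A)\{e}
    have hcA : (M.contract A).IsMatroid := isMatroid_contract_aux hM hAE
    have hS : (M.E \ A) \ {e} ⊆ (M.contract A).E := Finset.sdiff_subset
    have h := hN2.2 (M.contract A) hcA ((M.E \ A) \ {e}) hS
    have e1 : (M.contract A).restrict ((M.E \ A) \ {e}) = (M.delete {e}).contract A := by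
      simp only [contract, restrict, delete]
      congr 1
      ext x; simp only [Finset.mem_sdiff, Finset.mem_singleton]; tauto
    have hSA : ((M.E \ A) \ {e}) ∪ A = M.E \ {e} := by
      ext x
      simp only [Finset.mem_union, Finset.mem_sdiff, Finset.mem_singleton]
      constructor
      · rintro (⟨⟨hx, _⟩, hx2⟩ | hx)
        · exact ⟨hx, hx2⟩
        · exact ⟨hAE hx, fun h => heA (h ▸ hx)⟩
      · rintro ⟨hx, hx2⟩
        by_cases hxA : x ∈ A
        · exact Or.inr hxA
        · exact Or.inl ⟨⟨hx, hxA⟩, hx2⟩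
    have e2 : (M.contract A).contract ((M.E \ A) \ {e}) = M.contract (M.E \ {e}) := by
      simp only [contract]
      congr 1
      · ext x
        by_cases hxe : x = e
        · subst hxe; simp [he, heA]
        · simp only [Finset.mem_sdiff, Finset.mem_singleton]
          tauto
      · funext X
        have hle : M.rk A ≤ M.rk (((M.E \ A) \ {e}) ∪ A) :=
          h2 A _ Finset.subset_union_right (hSA ▸ Finset.sdiff_subset)
        rw [Finset.union_assoc, hSA] at *
        omega
    rw [e1, e2] at h
    have e3 : (M.delete {e}).restrict A = M.restrict A := rfl
    rw [h, e3]; ring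
  have hctr : ∀ A ∈ (M.E \ {e}).powerset,
      N1 (M.restrict (insert e A)) * N2 (M.contract (insert e A)) =
        N1 (M.restrict {e}) * (N1 ((M.contract {e}).restrict A) *
          N2 ((M.contract {e}).contract A)) := by
    intro A hA
    rw [Finset.mem_powerset] at hA
    have hAE : A ⊆ M.E := hA.trans Finset.sdiff_subset
    have heA : e ∉ A := fun h => (Finset.mem_sdiff.mp (hA h)).2 (Finset.mem_singleton_self e)
    have hiAE : insert e A ⊆ M.E := Finset.insert_subset he hAE
    have hrA : (M.restrict (insert e A)).IsMatroid := isMatroid_restrict_aux hM hiAE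
    have h := hN1.2 (M.restrict (insert e A)) hrA {e}
      (Finset.singleton_subset_iff.mpr (Finset.mem_insert_self e A))
    have e1 : (M.restrict (insert e A)).restrict {e} = M.restrict {e} := rfl
    have e2 : (M.restrict (insert e A)).contract {e} = (M.contract {e}).restrict A := by
      simp only [restrict, contract]
      congr 1
      ext x
      simp only [Finset.mem_sdiff, Finset.mem_insert, Finset.mem_singleton]
      constructor
      · rintro ⟨hx | hx, hx2⟩
        · exact absurd hx hx2
        · exact hx
      · intro hx; exact ⟨Or.inr hx, fun h => heA (h ▸ hx)⟩
    rw [e1, e2] at h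
    have e3 : (M.contract {e}).contract A = M.contract (insert e A) := by
      simp only [contract]
      congr 1
      · ext x
        simp only [Finset.mem_sdiff, Finset.mem_singleton, Finset.mem_insert]
        tauto
      · funext X
        have hu1 : X ∪ A ∪ {e} = X ∪ insert e A := by
          ext x; simp only [Finset.mem_union, Finset.mem_singleton, Finset.mem_insert]; tauto
        have hu2 : A ∪ {e} = insert e A := by
          ext x; simp only [Finset.mem_union, Finset.mem_singleton, Finset.mem_insert]; tauto
        have hle : M.rk {e} ≤ M.rk (insert e A) :=
          h2 {e} (insert e A) (Finset.singleton_subset_iff.mpr (Finset.mem_insert_self e A)) hiAE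
        rw [hu1, hu2]
        omega
    rw [h, e3]; ring
  rw [Finset.sum_congr rfl hdel, Finset.sum_congr rfl hctr, ← Finset.mul_sum, ← Finset.mul_sum]
  have hEc : (M.contract {e}).E = M.E \ {e} := rfl
  have hEd : (M.delete {e}).E = M.E \ {e} := rfl
  rw [tutteChar, tutteChar, hEc, hEd]
  ring

end PreMatroid
end

section
/- Let (M,M') be a matroid perspective on a finite ground set E, let ℱ(M,M') = {X ⊆ E : X is independent in M and spanning in M'}, and let a ∈ E. Minors of perspectives are taken componentwise. Then: (i) if a is a coloop of M' (i.e. rk_{M'}(E∖{a}) = rk_{M'}(E) − 1), then ℱ(M∖a, M'∖a) = {X∖{a} : X ∈ ℱ(M,M')}; otherwise ℱ(M∖a, M'∖a) = {X ∈ ℱ(M,M') : a ∉ X}. (ii) if a is a loop of M (i.e. rk_M({a}) = 0), then ℱ(M/a, M'/a) = ℱ(M,M') (every feasible set avoids a); otherwise ℱ(M/a, M'/a) = {X∖{a} : X ∈ ℱ(M,M'), a ∈ X}. -/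
open Finset

namespace PreMatroid

/-- `X` is independent in `M` if `rk(X) = |X|`. -/
def Indep {α : Type*} (M : PreMatroid α) (X : Finset α) : Prop :=
  M.rk X = X.card

/-- `X` is spanning in `M` if `rk(X) = rk(E(M))`. -/
def Spanning {α : Type*} (M : PreMatroid α) (X : Finset α) : Prop :=
  M.rk X = M.rk M.E

/-- `(M, M')` is a matroid perspective: `M` and `M'` are matroids on the same ground
set and `rk_M(B) − rk_M(A) ≥ rk_{M'}(B) − rk_{M'}(A)` for all `A ⊆ B ⊆ E`. -/
def IsPerspective {α : Type*} [DecidableEq α] (M M' : PreMatroid α) : Prop :=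
  M.IsMatroid ∧ M'.IsMatroid ∧ M'.E = M.E ∧
    ∀ A B : Finset α, A ⊆ B → B ⊆ M.E →
      ((M'.rk B : ℤ) - M'.rk A) ≤ (M.rk B : ℤ) - M.rk A

/-- The collection of feasible sets of the matroid perspective `(M, M')`:
subsets of the ground set that are independent in `M` and spanning in `M'`. -/
def FeasSet {α : Type*} (M M' : PreMatroid α) : Set (Finset α) :=
  {X | X ⊆ M.E ∧ Indep M X ∧ Spanning M' X}

private lemma rk_union_singleton_le {α : Type*} [DecidableEq α] {M : PreMatroid α}
    (hM : M.IsMatroid) {Y : Finset α} {a : α} (hY : Y ⊆ M.E) (ha : a ∈ M.E) (haY : a ∉ Y) :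
    M.rk (Y ∪ {a}) ≤ M.rk Y + M.rk {a} := by
  have h := hM.2.2 Y {a} hY (Finset.singleton_subset_iff.mpr ha)
  rw [Finset.inter_singleton_of_notMem haY] at h
  omega

private lemma rk_le_sdiff_add {α : Type*} [DecidableEq α] {M : PreMatroid α}
    (hM : M.IsMatroid) {X : Finset α} {a : α} (hX : X ⊆ M.E) (haX : a ∈ X) :
    M.rk X ≤ M.rk (X \ {a}) + M.rk {a} := by
  have h := hM.2.2 (X \ {a}) {a} (Finset.sdiff_subset.trans hX)
    (Finset.singleton_subset_iff.mpr (hX haX))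
  rw [Finset.sdiff_union_self_eq_union,
    Finset.union_eq_left.mpr (Finset.singleton_subset_iff.mpr haX),
    Finset.sdiff_inter_self] at h
  omega

private lemma submod_split {α : Type*} [DecidableEq α] {M : PreMatroid α} (hM : M.IsMatroid)
    {Y : Finset α} {a : α} (ha : a ∈ M.E) (hYE : Y ⊆ M.E) (haY : a ∉ Y) :
    M.rk M.E + M.rk Y ≤ M.rk (Y ∪ {a}) + M.rk (M.E \ {a}) := by
  have hu : (Y ∪ {a}) ∪ (M.E \ {a}) = M.E := by
    ext x
    simp only [Finset.mem_union, Finset.mem_sdiff, Finset.mem_singleton]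
    constructor
    · rintro ((hx | rfl) | ⟨hx, _⟩)
      · exact hYE hx
      · exact ha
      · exact hx
    · intro hx
      by_cases hxa : x = a
      · exact Or.inl (Or.inr hxa)
      · exact Or.inr ⟨hx, hxa⟩
  have hi : (Y ∪ {a}) ∩ (M.E \ {a}) = Y := by
    ext x
    simp only [Finset.mem_inter, Finset.mem_union, Finset.mem_sdiff, Finset.mem_singleton]
    constructor
    · rintro ⟨hx | rfl, _, hne⟩
      · exact hx
      · exact absurd rfl hne
    · intro hx
      exact ⟨Or.inl hx, hYE hx, fun hxa => haY (hxa ▸ hx)⟩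
  have h := hM.2.2 (Y ∪ {a}) (M.E \ {a})
    (Finset.union_subset hYE (Finset.singleton_subset_iff.mpr ha)) Finset.sdiff_subset
  rw [hu, hi] at h
  omega

/-- How the feasible sets of a matroid perspective behave under deletion and
contraction of a single element `a`. -/
theorem feasSet_minors {α : Type*} [DecidableEq α] (M M' : PreMatroid α)
    (h : IsPerspective M M') (a : α) (ha : a ∈ M.E) :
    ((M'.rk (M'.E \ {a}) + 1 = M'.rk M'.E →
        FeasSet (M.delete {a}) (M'.delete {a}) =
          (fun X : Finset α => X \ {a}) '' FeasSet M M') ∧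
      (¬(M'.rk (M'.E \ {a}) + 1 = M'.rk M'.E) →
        FeasSet (M.delete {a}) (M'.delete {a}) =
          {X ∈ FeasSet M M' | a ∉ X})) ∧
    ((M.rk {a} = 0 →
        FeasSet (M.contract {a}) (M'.contract {a}) = FeasSet M M' ∧
          ∀ X ∈ FeasSet M M', a ∉ X) ∧
      (¬(M.rk {a} = 0) →
        FeasSet (M.contract {a}) (M'.contract {a}) =
          (fun X : Finset α => X \ {a}) '' {X ∈ FeasSet M M' | a ∈ X})) := by
  obtain ⟨hM, hM', hEE, hP⟩ := h
  obtain ⟨hc1, hc2, hc3⟩ := hM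
  obtain ⟨hc1', hc2', hc3'⟩ := hM'
  have hM : M.IsMatroid := ⟨hc1, hc2, hc3⟩
  have hM' : M'.IsMatroid := ⟨hc1', hc2', hc3'⟩
  have ha' : a ∈ M'.E := by rw [hEE]; exact ha
  have haS : ({a} : Finset α) ⊆ M.E := Finset.singleton_subset_iff.mpr ha
  have haS' : ({a} : Finset α) ⊆ M'.E := Finset.singleton_subset_iff.mpr ha'
  have hrk0 : M.rk ∅ = 0 := Nat.le_zero.mp (by simpa using hc1 ∅ (Finset.empty_subset _))
  have hrk0' : M'.rk ∅ = 0 := Nat.le_zero.mp (by simpa using hc1' ∅ (Finset.empty_subset _))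
  have hra1 : M.rk {a} ≤ 1 := by simpa using hc1 {a} haS
  have hra1' : M'.rk {a} ≤ 1 := by simpa using hc1' {a} haS'
  have hEa : (M'.E \ {a}) ∪ {a} = M'.E := by
    rw [Finset.sdiff_union_self_eq_union, Finset.union_eq_left.mpr haS']
  have hE'E : M'.E \ {a} = M.E \ {a} := by rw [hEE]
  have hdel : ∀ X : Finset α, X ∈ FeasSet (M.delete {a}) (M'.delete {a}) ↔
      (X ⊆ M.E \ {a} ∧ M.rk X = X.card ∧ M'.rk X = M'.rk (M'.E \ {a})) := fun X => Iff.rfl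
  have hcon : ∀ X : Finset α, X ∈ FeasSet (M.contract {a}) (M'.contract {a}) ↔
      (X ⊆ M.E \ {a} ∧ M.rk (X ∪ {a}) - M.rk {a} = X.card ∧
        M'.rk (X ∪ {a}) - M'.rk {a} = M'.rk ((M'.E \ {a}) ∪ {a}) - M'.rk {a}) := fun X => Iff.rfl
  have hfe : ∀ X : Finset α, X ∈ FeasSet M M' ↔
      (X ⊆ M.E ∧ M.rk X = X.card ∧ M'.rk X = M'.rk M'.E) := fun X => Iff.rfl
  refine ⟨⟨?_, ?_⟩, ?_, ?_⟩
  · -- deletion, coloop case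
    intro hcol
    ext Y
    rw [hdel]
    constructor
    · rintro ⟨hYs, hYi, hYsp⟩
      have hYE : Y ⊆ M.E := hYs.trans Finset.sdiff_subset
      have haY : a ∉ Y := fun hy => by simpa using (Finset.mem_sdiff.mp (hYs hy)).2
      have hYE' : Y ⊆ M'.E := by rw [hEE]; exact hYE
      have hsubM : Y ∪ {a} ⊆ M.E := Finset.union_subset hYE haS
      have hsubM' : Y ∪ {a} ⊆ M'.E := Finset.union_subset hYE' haS'
      have s1 := submod_split hM' ha' hYE' haY
      have hmono' : M'.rk (Y ∪ {a}) ≤ M'.rk M'.E := hc2' _ _ hsubM' (subset_refl _)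
      have hsp : M'.rk (Y ∪ {a}) = M'.rk M'.E := by omega
      have hp := hP Y (Y ∪ {a}) Finset.subset_union_left hsubM
      have hcb := hc1 _ hsubM
      have hcard : (Y ∪ {a}).card = Y.card + 1 := by
        rw [Finset.union_comm, ← Finset.insert_eq, Finset.card_insert_of_notMem haY]
      refine ⟨Y ∪ {a}, ⟨hsubM, ?_, hsp⟩, ?_⟩
      · show M.rk (Y ∪ {a}) = (Y ∪ {a}).card
        omega
      · show (Y ∪ {a}) \ {a} = Y
        rw [Finset.union_sdiff_distrib, Finset.sdiff_self, Finset.union_empty,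
          Finset.sdiff_singleton_eq_erase, Finset.erase_eq_of_notMem haY]
    · rintro ⟨X, hX, rfl⟩
      beta_reduce
      obtain ⟨hXE, hXi, hXsp⟩ := (hfe X).mp hX
      have hXE' : X ⊆ M'.E := by rw [hEE]; exact hXE
      have haX : a ∈ X := by
        by_contra haX
        have hXs' : X ⊆ M'.E \ {a} :=
          Finset.subset_sdiff.mpr ⟨hXE', Finset.disjoint_singleton_right.mpr haX⟩
        have := hc2' X (M'.E \ {a}) hXs' Finset.sdiff_subset
        omega
      have h1 : 1 ≤ X.card := Finset.card_pos.mpr ⟨a, haX⟩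
      have hcs : (X \ {a}).card = X.card - 1 := by
        rw [Finset.card_sdiff_of_subset (Finset.singleton_subset_iff.mpr haX), Finset.card_singleton]
      have hsd := rk_le_sdiff_add hM hXE haX
      have hsd' := rk_le_sdiff_add hM' hXE' haX
      have hb := hc1 (X \ {a}) (Finset.sdiff_subset.trans hXE)
      have hmono' := hc2' (X \ {a}) (M'.E \ {a})
        (Finset.sdiff_subset_sdiff hXE' (subset_refl _)) Finset.sdiff_subset
      exact ⟨by rw [← hE'E]; exact Finset.sdiff_subset_sdiff hXE' (subset_refl _),
        by omega, by omega⟩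
  · -- deletion, non-coloop case
    intro hcol
    have hle : M'.rk (M'.E \ {a}) ≤ M'.rk M'.E := hc2' _ _ Finset.sdiff_subset (subset_refl _)
    have hge := rk_le_sdiff_add hM' (subset_refl M'.E) ha'
    have hnc : M'.rk (M'.E \ {a}) = M'.rk M'.E := by omega
    ext X
    rw [hdel]
    constructor
    · rintro ⟨hXs, hXi, hXsp⟩
      have haX : a ∉ X := fun hy => by simpa using (Finset.mem_sdiff.mp (hXs hy)).2
      exact ⟨(hfe X).mpr ⟨hXs.trans Finset.sdiff_subset, hXi, by rw [hXsp, hnc]⟩, haX⟩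
    · rintro ⟨hX, haX⟩
      obtain ⟨hXE, hXi, hXsp⟩ := (hfe X).mp hX
      exact ⟨Finset.subset_sdiff.mpr ⟨hXE, Finset.disjoint_singleton_right.mpr haX⟩,
        hXi, by rw [hXsp, hnc]⟩
  · -- contraction, loop case
    intro hl
    have hl' : M'.rk {a} = 0 := by
      have := hP ∅ {a} (Finset.empty_subset _) haS
      omega
    have avoid : ∀ X ∈ FeasSet M M', a ∉ X := by
      intro X hX haX
      obtain ⟨hXE, hXi, _⟩ := (hfe X).mp hX
      have hsd := rk_le_sdiff_add hM hXE haX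
      have hb := hc1 (X \ {a}) (Finset.sdiff_subset.trans hXE)
      have hcs : (X \ {a}).card = X.card - 1 := by
        rw [Finset.card_sdiff_of_subset (Finset.singleton_subset_iff.mpr haX), Finset.card_singleton]
      have h1 : 1 ≤ X.card := Finset.card_pos.mpr ⟨a, haX⟩
      omega
    have hq : ∀ X, X ⊆ M.E → a ∉ X → M.rk (X ∪ {a}) = M.rk X := by
      intro X hX haX
      have h1 := rk_union_singleton_le hM hX ha haX
      have h2 := hc2 X (X ∪ {a}) Finset.subset_union_left (Finset.union_subset hX haS)
      omega
    have hq' : ∀ X, X ⊆ M'.E → a ∉ X → M'.rk (X ∪ {a}) = M'.rk X := by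
      intro X hX haX
      have h1 := rk_union_singleton_le hM' hX ha' haX
      have h2 := hc2' X (X ∪ {a}) Finset.subset_union_left (Finset.union_subset hX haS')
      omega
    refine ⟨?_, avoid⟩
    ext X
    rw [hcon, hfe, hEa]
    constructor
    · rintro ⟨hXs, hXi, hXsp⟩
      have haX : a ∉ X := fun hy => by simpa using (Finset.mem_sdiff.mp (hXs hy)).2
      have hXE : X ⊆ M.E := hXs.trans Finset.sdiff_subset
      have hXE' : X ⊆ M'.E := by rw [hEE]; exact hXE
      rw [hq X hXE haX, hl, Nat.sub_zero] at hXi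
      rw [hq' X hXE' haX, hl', Nat.sub_zero, Nat.sub_zero] at hXsp
      exact ⟨hXE, hXi, hXsp⟩
    · rintro ⟨hXE, hXi, hXsp⟩
      have haX : a ∉ X := avoid X ((hfe X).mpr ⟨hXE, hXi, hXsp⟩)
      have hXE' : X ⊆ M'.E := by rw [hEE]; exact hXE
      refine ⟨Finset.subset_sdiff.mpr ⟨hXE, Finset.disjoint_singleton_right.mpr haX⟩, ?_, ?_⟩
      · rw [hq X hXE haX, hl, Nat.sub_zero]; exact hXi
      · rw [hq' X hXE' haX, hl', Nat.sub_zero, Nat.sub_zero]; exact hXsp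
  · -- contraction, non-loop case
    intro hl
    have hra : M.rk {a} = 1 := by omega
    ext Y
    rw [hcon, hEa]
    constructor
    · rintro ⟨hYs, hYi, hYsp⟩
      have haY : a ∉ Y := fun hy => by simpa using (Finset.mem_sdiff.mp (hYs hy)).2
      have hYE : Y ⊆ M.E := hYs.trans Finset.sdiff_subset
      have hYE' : Y ⊆ M'.E := by rw [hEE]; exact hYE
      have hsubM : Y ∪ {a} ⊆ M.E := Finset.union_subset hYE haS
      have hsubM' : Y ∪ {a} ⊆ M'.E := Finset.union_subset hYE' haS'
      have hmono1 : M.rk {a} ≤ M.rk (Y ∪ {a}) := hc2 _ _ Finset.subset_union_right hsubM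
      have hmono1' : M'.rk {a} ≤ M'.rk (Y ∪ {a}) := hc2' _ _ Finset.subset_union_right hsubM'
      have hmono2' : M'.rk {a} ≤ M'.rk M'.E := hc2' _ _ haS' (subset_refl _)
      have hcard : (Y ∪ {a}).card = Y.card + 1 := by
        rw [Finset.union_comm, ← Finset.insert_eq, Finset.card_insert_of_notMem haY]
      refine ⟨Y ∪ {a}, ⟨(hfe _).mpr ⟨hsubM, by omega, by omega⟩, by simp⟩, ?_⟩
      show (Y ∪ {a}) \ {a} = Y
      rw [Finset.union_sdiff_distrib, Finset.sdiff_self, Finset.union_empty,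
        Finset.sdiff_singleton_eq_erase, Finset.erase_eq_of_notMem haY]
    · rintro ⟨X, ⟨hX, haX⟩, rfl⟩
      beta_reduce
      obtain ⟨hXE, hXi, hXsp⟩ := (hfe X).mp hX
      have hXE' : X ⊆ M'.E := by rw [hEE]; exact hXE
      have hu : (X \ {a}) ∪ {a} = X := by
        rw [Finset.sdiff_union_self_eq_union,
          Finset.union_eq_left.mpr (Finset.singleton_subset_iff.mpr haX)]
      have hcs : (X \ {a}).card = X.card - 1 := by
        rw [Finset.card_sdiff_of_subset (Finset.singleton_subset_iff.mpr haX), Finset.card_singleton]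
      have h1 : 1 ≤ X.card := Finset.card_pos.mpr ⟨a, haX⟩
      refine ⟨by rw [← hE'E]; exact Finset.sdiff_subset_sdiff hXE' (subset_refl _), ?_, ?_⟩
      · rw [hu, hra]; omega
      · rw [hu, hXsp]


end PreMatroid
end

section
/- Let (M,M') be a matroid perspective on a finite ground set E and let a,b,c,d,e,f be elements of a commutative ring R. Then the Las Vergnas polynomial satisfies the convolution formula: 𝔗_{M,M'}(1−ab, 1−cd, −ef) = Σ_{A⊆E} a^{rk(M')−rk_{M'}(A)} · d^{|A|−rk_M(A)} · e^{(rk(M)−rk_M(A))−(rk(M')−rk_{M'}(A))} · 𝔗_{M|A, M'|A}(1−a, 1−c, −e) · 𝔗_{M/A, M'/A}(1−b, 1−d, −f). -/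
open Finset

namespace PreMatroid

/-- The Las Vergnas polynomial of a matroid perspective `(M, M')`:
`𝔗_{M,M'}(x,y,z) = Σ_{A⊆E} (x−1)^{rk M' − rk_{M'} A} (y−1)^{|A|−rk_M A}
z^{(rk M − rk_M A)−(rk M' − rk_{M'} A)}`. -/
def lasVergnas {α : Type*} (M M' : PreMatroid α) {R : Type*} [CommRing R]
    (x y z : R) : R :=
  ∑ A ∈ M.E.powerset,
    (x - 1) ^ (M'.rank - M'.rk A) * (y - 1) ^ (A.card - M.rk A) *
      z ^ ((M.rank - M.rk A) - (M'.rank - M'.rk A))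



private lemma sum_pows {α : Type*} [DecidableEq α] {R : Type*} [CommRing R] (s : Finset α) :
    ∑ m ∈ s.powerset, (-1 : R) ^ m.card = if s = ∅ then 1 else 0 := by
  have h := Finset.sum_powerset_neg_one_pow_card (x := s)
  have h2 := congrArg (Int.cast : ℤ → R) h
  push_cast at h2
  exact h2

private lemma pw {R : Type*} [Monoid R] (x : R) {m n : ℕ} (h : m = n) : x ^ m = x ^ n := by
  rw [h]

private lemma convKey {R : Type*} [CommRing R] (a b c d e f : R)
    (ρ ρ' nA nB nC nT rA rB rT r'A r'B r'T : ℕ)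
    (h1 : rB ≤ rA) (h2 : rA ≤ rT) (h3 : rT ≤ ρ)
    (h1' : r'B ≤ r'A) (h2' : r'A ≤ r'T) (h3' : r'T ≤ ρ')
    (hB : rB ≤ nB) (hA : rA ≤ nA) (hcard : nT = nA + nC) (hTc : rT ≤ rA + nC)
    (p1 : (r'A : ℤ) - r'B ≤ (rA : ℤ) - rB)
    (p2 : (r'T : ℤ) - r'A ≤ (rT : ℤ) - rA)
    (p3 : (ρ' : ℤ) - r'A ≤ (ρ : ℤ) - rA)
    (p4 : (ρ' : ℤ) - r'T ≤ (ρ : ℤ) - rT) :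
    a ^ (ρ' - r'A) * d ^ (nA - rA) * e ^ ((ρ - rA) - (ρ' - r'A)) *
      ((-a) ^ (r'A - r'B) * (-c) ^ (nB - rB) *
        (-e) ^ ((rA - rB) - (r'A - r'B))) *
      ((-b) ^ ((ρ' - r'A) - (r'T - r'A)) * (-d) ^ (nC - (rT - rA)) *
        (-f) ^ (((ρ - rA) - (rT - rA)) - ((ρ' - r'A) - (r'T - r'A)))) =
    (-1) ^ nA *
      ((-1 : R) ^ (ρ + nB + nT) * a ^ (ρ' - r'B) * b ^ (ρ' - r'T) * c ^ (nB - rB) *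
        d ^ (nT - rT) * e ^ ((ρ - rB) - (ρ' - r'B)) * f ^ ((ρ - rT) - (ρ' - r'T))) := by
  have sign : (-1 : R) ^ ((r'A - r'B) + (nB - rB) + ((rA - rB) - (r'A - r'B))
        + ((ρ' - r'A) - (r'T - r'A)) + (nC - (rT - rA))
        + (((ρ - rA) - (rT - rA)) - ((ρ' - r'A) - (r'T - r'A))))
      = (-1) ^ (nA + (ρ + nB + nT)) := by
    rw [neg_one_pow_eq_pow_mod_two, neg_one_pow_eq_pow_mod_two (n := nA + (ρ + nB + nT))]
    congr 1
    omega
  have ea : (ρ' - r'A) + (r'A - r'B) = ρ' - r'B := by omega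
  have eb : (ρ' - r'A) - (r'T - r'A) = ρ' - r'T := by omega
  have ed : (nA - rA) + (nC - (rT - rA)) = nT - rT := by omega
  have ee : ((ρ - rA) - (ρ' - r'A)) + ((rA - rB) - (r'A - r'B))
      = (ρ - rB) - (ρ' - r'B) := by omega
  have ef' : ((ρ - rA) - (rT - rA)) - ((ρ' - r'A) - (r'T - r'A))
      = (ρ - rT) - (ρ' - r'T) := by omega
  have na : ∀ (x : R) (n : ℕ), (-x) ^ n = (-1) ^ n * x ^ n := fun x n => neg_pow x n
  calc a ^ (ρ' - r'A) * d ^ (nA - rA) * e ^ ((ρ - rA) - (ρ' - r'A)) *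
      ((-a) ^ (r'A - r'B) * (-c) ^ (nB - rB) *
        (-e) ^ ((rA - rB) - (r'A - r'B))) *
      ((-b) ^ ((ρ' - r'A) - (r'T - r'A)) * (-d) ^ (nC - (rT - rA)) *
        (-f) ^ (((ρ - rA) - (rT - rA)) - ((ρ' - r'A) - (r'T - r'A))))
      = (-1 : R) ^ ((r'A - r'B) + (nB - rB) + ((rA - rB) - (r'A - r'B))
          + ((ρ' - r'A) - (r'T - r'A)) + (nC - (rT - rA))
          + (((ρ - rA) - (rT - rA)) - ((ρ' - r'A) - (r'T - r'A)))) *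
        (a ^ ((ρ' - r'A) + (r'A - r'B)) * b ^ ((ρ' - r'A) - (r'T - r'A)) *
          c ^ (nB - rB) * d ^ ((nA - rA) + (nC - (rT - rA))) *
          e ^ (((ρ - rA) - (ρ' - r'A)) + ((rA - rB) - (r'A - r'B))) *
          f ^ (((ρ - rA) - (rT - rA)) - ((ρ' - r'A) - (r'T - r'A)))) := by
        rw [na a, na c, na e, na b, na d, na f]
        simp only [pow_add]
        ring
    _ = _ := by
        rw [sign, pw a ea, pw b eb, pw d ed, pw e ee, pw f ef', pow_add]
        ring

private lemma sum_between {α : Type*} [DecidableEq α] {R : Type*} [CommRing R]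
    (B T : Finset α) (hBT : B ⊆ T) :
    ∑ A ∈ T.powerset.filter (B ⊆ ·), (-1 : R) ^ A.card
      = if T = B then (-1) ^ B.card else 0 := by
  have key : ∑ A ∈ T.powerset.filter (B ⊆ ·), (-1 : R) ^ A.card
      = ∑ C ∈ (T \ B).powerset, (-1 : R) ^ B.card * (-1) ^ C.card := by
    refine Finset.sum_bij' (fun A _ => A \ B) (fun C _ => B ∪ C) ?_ ?_ ?_ ?_ ?_
    · intro A hA
      rw [mem_filter, mem_powerset] at hA
      rw [mem_powerset]
      exact sdiff_subset_sdiff hA.1 (subset_refl B)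
    · intro C hC
      rw [mem_powerset] at hC
      rw [mem_filter, mem_powerset]
      refine ⟨union_subset hBT (hC.trans sdiff_subset), subset_union_left⟩
    · intro A hA
      rw [mem_filter, mem_powerset] at hA
      exact union_sdiff_of_subset hA.2
    · intro C hC
      rw [mem_powerset] at hC
      apply union_sdiff_cancel_left
      exact disjoint_left.2 fun x hxB hxC => (mem_sdiff.1 (hC hxC)).2 hxB
    · intro A hA
      rw [mem_filter, mem_powerset] at hA
      rw [← pow_add]
      congr 1
      show #A = #B + #(A \ B)
      have := card_sdiff_of_subset hA.2
      have := card_le_card hA.2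
      omega
  rw [key, ← Finset.mul_sum, sum_pows]
  by_cases hTB : T = B
  · subst hTB
    rw [if_pos (by simp), if_pos rfl, mul_one]
  · have hne : T \ B ≠ ∅ := fun hc => hTB (subset_antisymm (sdiff_eq_empty_iff_subset.1 hc) hBT)
    rw [if_neg hne, if_neg hTB, mul_zero]

private lemma diagKey {R : Type*} [CommRing R] (a b c d e f : R) (ρ ρ' nB rB r'B : ℕ)
    (hB : rB ≤ nB) (h3 : rB ≤ ρ) (h3' : r'B ≤ ρ')
    (p : (ρ' : ℤ) - r'B ≤ (ρ : ℤ) - rB) :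
    (1 - a * b - 1) ^ (ρ' - r'B) * (1 - c * d - 1) ^ (nB - rB) *
        (-(e * f)) ^ ((ρ - rB) - (ρ' - r'B))
      = (-1) ^ nB * ((-1 : R) ^ (ρ + nB + nB) * a ^ (ρ' - r'B) * b ^ (ρ' - r'B) *
          c ^ (nB - rB) * d ^ (nB - rB) * e ^ ((ρ - rB) - (ρ' - r'B)) *
          f ^ ((ρ - rB) - (ρ' - r'B))) := by
  have h1 : (1 - a * b - 1 : R) = -(a * b) := by ring
  have h2 : (1 - c * d - 1 : R) = -(c * d) := by ring
  have sign : (-1 : R) ^ ((ρ' - r'B) + (nB - rB) + ((ρ - rB) - (ρ' - r'B)))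
      = (-1) ^ (nB + (ρ + nB + nB)) := by
    rw [neg_one_pow_eq_pow_mod_two, neg_one_pow_eq_pow_mod_two (n := nB + (ρ + nB + nB))]
    congr 1
    omega
  rw [h1, h2, neg_pow (a * b), neg_pow (c * d), neg_pow (e * f)]
  calc (-1 : R) ^ (ρ' - r'B) * (a * b) ^ (ρ' - r'B) *
        ((-1) ^ (nB - rB) * (c * d) ^ (nB - rB)) *
        ((-1) ^ ((ρ - rB) - (ρ' - r'B)) * (e * f) ^ ((ρ - rB) - (ρ' - r'B)))
      = (-1 : R) ^ ((ρ' - r'B) + (nB - rB) + ((ρ - rB) - (ρ' - r'B))) *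
        ((a * b) ^ (ρ' - r'B) * (c * d) ^ (nB - rB) * (e * f) ^ ((ρ - rB) - (ρ' - r'B))) := by
        simp only [pow_add]
        ring
    _ = _ := by
        rw [sign, pow_add, mul_pow, mul_pow, mul_pow]
        ring


private def gmon {α : Type*} {R : Type*} [CommRing R] (M M' : PreMatroid α)
    (a b c d e f : R) (B T : Finset α) : R :=
  (-1 : R) ^ (M.rank + B.card + T.card) * a ^ (M'.rank - M'.rk B) * b ^ (M'.rank - M'.rk T) *
    c ^ (B.card - M.rk B) * d ^ (T.card - M.rk T) *
    e ^ ((M.rank - M.rk B) - (M'.rank - M'.rk B)) *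
    f ^ ((M.rank - M.rk T) - (M'.rank - M'.rk T))

private lemma mul_sum_mul_sum {ι κ : Type*} {R : Type*} [CommRing R] (s : Finset ι)
    (t : Finset κ) (p : R) (F : ι → R) (G : κ → R) :
    p * (∑ i ∈ s, F i) * (∑ j ∈ t, G j) = ∑ i ∈ s, ∑ j ∈ t, p * F i * G j := by
  simp only [Finset.mul_sum, Finset.sum_mul]
  rw [Finset.sum_comm]


/-- The six-variable convolution formula for the Las Vergnas polynomial. -/
theorem lasVergnas_convolution {α : Type*} [DecidableEq α] {R : Type*} [CommRing R]
    (M M' : PreMatroid α) (h : IsPerspective M M') (a b c d e f : R) :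
    lasVergnas M M' (1 - a * b) (1 - c * d) (-(e * f)) =
      ∑ A ∈ M.E.powerset,
        a ^ (M'.rank - M'.rk A) * d ^ (A.card - M.rk A) *
          e ^ ((M.rank - M.rk A) - (M'.rank - M'.rk A)) *
          lasVergnas (M.restrict A) (M'.restrict A) (1 - a) (1 - c) (-e) *
          lasVergnas (M.contract A) (M'.contract A) (1 - b) (1 - d) (-f) := by
  classical
  obtain ⟨⟨hMc, hMm, hMs⟩, ⟨hM'c, hM'm, hM's⟩, hE', hpers⟩ := h
  have htop : ∀ {X : Finset α}, X ⊆ M.E → M.rk X ≤ M.rank :=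
    fun {X} hX => hMm X M.E hX (subset_refl _)
  have hm' : ∀ {X Y : Finset α}, X ⊆ Y → Y ⊆ M.E → M'.rk X ≤ M'.rk Y :=
    fun {X Y} hXY hY => hM'm X Y hXY (by rw [hE']; exact hY)
  have htop' : ∀ {X : Finset α}, X ⊆ M.E → M'.rk X ≤ M'.rank :=
    fun {X} hX => hM'm X M'.E (by rw [hE']; exact hX) (subset_refl _)
  have hptop : ∀ {X : Finset α}, X ⊆ M.E →
      (M'.rank : ℤ) - M'.rk X ≤ (M.rank : ℤ) - M.rk X := by
    intro X hX
    have h0 := hpers X M.E hX (subset_refl _)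
    have hr : M'.rank = M'.rk M.E := by rw [rank, hE']
    rw [hr]
    exact h0
  have step1 : ∀ A ∈ M.E.powerset,
      a ^ (M'.rank - M'.rk A) * d ^ (A.card - M.rk A) *
        e ^ ((M.rank - M.rk A) - (M'.rank - M'.rk A)) *
        lasVergnas (M.restrict A) (M'.restrict A) (1 - a) (1 - c) (-e) *
        lasVergnas (M.contract A) (M'.contract A) (1 - b) (1 - d) (-f)
      = ∑ B ∈ A.powerset, ∑ T ∈ M.E.powerset.filter (A ⊆ ·),
          (-1 : R) ^ A.card * gmon M M' a b c d e f B T := by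
    intro A hA
    rw [mem_powerset] at hA
    have hres : lasVergnas (M.restrict A) (M'.restrict A) (1 - a) (1 - c) (-e)
        = ∑ B ∈ A.powerset, (-a) ^ (M'.rk A - M'.rk B) * (-c) ^ (B.card - M.rk B) *
            (-e) ^ ((M.rk A - M.rk B) - (M'.rk A - M'.rk B)) := by
      simp only [lasVergnas, restrict, rank, sub_sub_cancel_left]
    have hcon : lasVergnas (M.contract A) (M'.contract A) (1 - b) (1 - d) (-f)
        = ∑ C ∈ (M.E \ A).powerset,
            (-b) ^ ((M'.rank - M'.rk A) - (M'.rk (C ∪ A) - M'.rk A)) *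
              (-d) ^ (C.card - (M.rk (C ∪ A) - M.rk A)) *
              (-f) ^ (((M.rank - M.rk A) - (M.rk (C ∪ A) - M.rk A))
                - ((M'.rank - M'.rk A) - (M'.rk (C ∪ A) - M'.rk A))) := by
      simp only [lasVergnas, contract, rank, hE', sdiff_union_of_subset hA,
        sub_sub_cancel_left]
    rw [hres, hcon, mul_sum_mul_sum]
    refine Finset.sum_congr rfl fun B hB => ?_
    rw [mem_powerset] at hB
    refine Finset.sum_bij' (fun C _ => A ∪ C) (fun T _ => T \ A) ?_ ?_ ?_ ?_ ?_
    · intro C hC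
      rw [mem_powerset] at hC
      rw [mem_filter, mem_powerset]
      exact ⟨union_subset hA (hC.trans sdiff_subset), subset_union_left⟩
    · intro T hT
      rw [mem_filter, mem_powerset] at hT
      rw [mem_powerset]
      exact sdiff_subset_sdiff hT.1 (subset_refl A)
    · intro C hC
      rw [mem_powerset] at hC
      apply union_sdiff_cancel_left
      exact disjoint_left.2 fun x hxA hxC => (mem_sdiff.1 (hC hxC)).2 hxA
    · intro T hT
      rw [mem_filter, mem_powerset] at hT
      exact union_sdiff_of_subset hT.2
    · intro C hC
      rw [mem_powerset] at hC
      have hCE : C ⊆ M.E := hC.trans sdiff_subset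
      have hdisj : Disjoint A C :=
        disjoint_left.2 fun x hxA hxC => (mem_sdiff.1 (hC hxC)).2 hxA
      have hTE : A ∪ C ⊆ M.E := union_subset hA hCE
      have hAT : A ⊆ A ∪ C := subset_union_left
      have hu : C ∪ A = A ∪ C := union_comm C A
      rw [hu]
      simp only [gmon]
      have hTc : M.rk (A ∪ C) ≤ M.rk A + C.card := by
        have hs := hMs A C hA hCE
        have hc := hMc C hCE
        omega
      exact convKey a b c d e f M.rank M'.rank A.card B.card C.card (A ∪ C).card
        (M.rk A) (M.rk B) (M.rk (A ∪ C)) (M'.rk A) (M'.rk B) (M'.rk (A ∪ C))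
        (hMm B A hB hA) (hMm A (A ∪ C) hAT hTE) (htop hTE)
        (hm' hB hA) (hm' hAT hTE) (htop' hTE)
        (hMc B (hB.trans hA)) (hMc A hA) (card_union_of_disjoint hdisj) hTc
        (hpers B A hB hA) (hpers A (A ∪ C) hAT hTE) (hptop hA) (hptop hTE)
  symm
  calc ∑ A ∈ M.E.powerset,
        a ^ (M'.rank - M'.rk A) * d ^ (A.card - M.rk A) *
          e ^ ((M.rank - M.rk A) - (M'.rank - M'.rk A)) *
          lasVergnas (M.restrict A) (M'.restrict A) (1 - a) (1 - c) (-e) *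
          lasVergnas (M.contract A) (M'.contract A) (1 - b) (1 - d) (-f)
      = ∑ A ∈ M.E.powerset, ∑ B ∈ A.powerset, ∑ T ∈ M.E.powerset.filter (A ⊆ ·),
          (-1 : R) ^ A.card * gmon M M' a b c d e f B T := Finset.sum_congr rfl step1
    _ = ∑ B ∈ M.E.powerset, ∑ A ∈ M.E.powerset.filter (B ⊆ ·),
          ∑ T ∈ M.E.powerset.filter (A ⊆ ·),
          (-1 : R) ^ A.card * gmon M M' a b c d e f B T := by
        refine Finset.sum_comm' ?_
        intro A B
        simp only [mem_powerset, mem_filter]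
        constructor
        · rintro ⟨h1, h2⟩; exact ⟨⟨h1, h2⟩, h2.trans h1⟩
        · rintro ⟨⟨h1, h2⟩, _⟩; exact ⟨h1, h2⟩
    _ = ∑ B ∈ M.E.powerset, ∑ T ∈ M.E.powerset.filter (B ⊆ ·),
          ∑ A ∈ T.powerset.filter (B ⊆ ·),
          (-1 : R) ^ A.card * gmon M M' a b c d e f B T := by
        refine Finset.sum_congr rfl fun B hB => ?_
        refine Finset.sum_comm' ?_
        intro A T
        simp only [mem_filter, mem_powerset]
        constructor
        · rintro ⟨⟨hAE, hBA⟩, hTE, hAT⟩; exact ⟨⟨hAT, hBA⟩, hTE, hBA.trans hAT⟩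
        · rintro ⟨⟨hAT, hBA⟩, hTE, _⟩; exact ⟨⟨hAT.trans hTE, hBA⟩, hTE, hAT⟩
    _ = ∑ B ∈ M.E.powerset, ∑ T ∈ M.E.powerset.filter (B ⊆ ·),
          (if T = B then (-1 : R) ^ B.card else 0) * gmon M M' a b c d e f B T := by
        refine Finset.sum_congr rfl fun B hB => Finset.sum_congr rfl fun T hT => ?_
        rw [mem_filter, mem_powerset] at hT
        rw [← Finset.sum_mul, sum_between B T hT.2]
    _ = ∑ B ∈ M.E.powerset, (-1 : R) ^ B.card * gmon M M' a b c d e f B B := by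
        refine Finset.sum_congr rfl fun B hB => ?_
        rw [mem_powerset] at hB
        rw [Finset.sum_eq_single B]
        · rw [if_pos rfl]
        · intro T hT hne
          rw [if_neg hne, zero_mul]
        · intro hB'
          exact absurd (mem_filter.2 ⟨mem_powerset.2 hB, subset_refl B⟩) hB'
    _ = lasVergnas M M' (1 - a * b) (1 - c * d) (-(e * f)) := by
        rw [lasVergnas]
        refine Finset.sum_congr rfl fun B hB => ?_
        rw [mem_powerset] at hB
        simp only [gmon]
        exact (diagKey a b c d e f M.rank M'.rank B.card (M.rk B) (M'.rk B)
          (hMc B hB) (htop hB) (htop' hB) (hptop hB)).symm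


end PreMatroid
end

section
/- Let M be a finite matroid on ground set E, let R be a commutative ring, and let m : 2^E → R be a function. Then the Backman–Lenz convolution formulas hold as identities of polynomials in x and y: 𝔐_{M,m}(x,y) = Σ_{A⊆E} 𝔐_{(M,m)|A}(0,y) · 𝔗_{M/A}(x,0) and 𝔐_{M,m}(x,y) = Σ_{A⊆E} 𝔗_{M|A}(0,y) · 𝔐_{(M,m)/A}(x,0). -/
open Finset

namespace PreMatroid

/-- The arithmetic Tutte polynomial of a pair `(M, m)` of a matroid and a
multiplicity function `m : 2^E → R`:
`𝔐_{M,m}(x,y) = Σ_{A⊆E} m(A) (x−1)^{rk M − rk A} (y−1)^{|A|−rk A}`. -/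
def arithTutte {α : Type*} (M : PreMatroid α) {R : Type*} [CommRing R]
    (m : Finset α → R) (x y : R) : R :=
  ∑ A ∈ M.E.powerset, m A * (x - 1) ^ (M.rank - M.rk A) * (y - 1) ^ (A.card - M.rk A)


section helpers
variable {α : Type*} [DecidableEq α] {S : Type*} [CommRing S]

lemma neg_one_pow_sub' {a b : ℕ} (h : b ≤ a) : ((-1 : S)) ^ (a - b) = (-1) ^ a * (-1) ^ b := by
  have h1 : ((-1 : S)) ^ (a - b) * (-1) ^ b = (-1) ^ a := by
    rw [← pow_add, Nat.sub_add_cancel h]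
  calc ((-1 : S)) ^ (a - b) = (-1) ^ (a - b) * ((-1) ^ b * (-1) ^ b) := by
        rw [← mul_pow]; simp
    _ = (-1) ^ a * (-1) ^ b := by rw [← mul_assoc, h1]

lemma neg_one_pow_mul_self' (k : ℕ) : ((-1 : S)) ^ k * (-1) ^ k = 1 := by
  rw [← mul_pow]; simp

lemma sum_neg_one_pow' (s : Finset α) : ∑ t ∈ s.powerset, (-1 : S) ^ t.card = 0 ^ s.card := by
  have := Finset.prod_add (fun _ : α => (-1 : S)) (fun _ => 1) s
  simp only [neg_add_cancel, prod_const, prod_const_one, mul_one, one_pow] at this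
  exact this.symm

/-- Reindexing `(A, C)` with `C ⊆ E \ A` to `(D, A)` with `A ⊆ D`, via `D = A ∪ C`. -/
lemma reindexL (E : Finset α) (F : Finset α → Finset α → S) :
    ∑ A ∈ E.powerset, ∑ C ∈ (E \ A).powerset, F A C
      = ∑ D ∈ E.powerset, ∑ A ∈ D.powerset, F A (D \ A) := by
  rw [Finset.sum_sigma', Finset.sum_sigma']
  refine Finset.sum_nbij' (fun p => ⟨p.1 ∪ p.2, p.1⟩) (fun q => ⟨q.2, q.1 \ q.2⟩)
    ?_ ?_ ?_ ?_ ?_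
  · rintro ⟨A, C⟩ hp
    simp only [Finset.mem_sigma, Finset.mem_powerset] at hp ⊢
    exact ⟨Finset.union_subset hp.1 (hp.2.trans (Finset.sdiff_subset)), Finset.subset_union_left⟩
  · rintro ⟨D, A⟩ hq
    simp only [Finset.mem_sigma, Finset.mem_powerset] at hq ⊢
    exact ⟨hq.2.trans hq.1, Finset.sdiff_subset_sdiff hq.1 Subset.rfl⟩
  · rintro ⟨A, C⟩ hp
    simp only [Finset.mem_sigma, Finset.mem_powerset] at hp
    have hdisj : Disjoint A C := Finset.disjoint_of_subset_right hp.2 Finset.disjoint_sdiff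
    simp [Finset.union_sdiff_cancel_left hdisj]
  · rintro ⟨D, A⟩ hq
    simp only [Finset.mem_sigma, Finset.mem_powerset] at hq
    simp [Finset.union_sdiff_of_subset hq.2]
  · rintro ⟨A, C⟩ hp
    simp only [Finset.mem_sigma, Finset.mem_powerset] at hp
    have hdisj : Disjoint A C := Finset.disjoint_of_subset_right hp.2 Finset.disjoint_sdiff
    simp [Finset.union_sdiff_cancel_left hdisj]

/-- The key cancellation: summing alternating signs over intermediate sets. -/
lemma keyK (D : Finset α) (f : Finset α → S) :
    ∑ A ∈ D.powerset, (∑ B ∈ A.powerset, f B) * (-1 : S) ^ A.card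
      = f D * (-1) ^ D.card := by
  have step1 : ∑ A ∈ D.powerset, (∑ B ∈ A.powerset, f B) * (-1 : S) ^ A.card
      = ∑ A ∈ D.powerset, ∑ B ∈ A.powerset,
          (fun B C => f B * (-1 : S) ^ (B ∪ C).card) B (A \ B) := by
    refine Finset.sum_congr rfl fun A hA => ?_
    rw [Finset.sum_mul]
    refine Finset.sum_congr rfl fun B hB => ?_
    show f B * (-1 : S) ^ A.card = f B * (-1 : S) ^ (B ∪ (A \ B)).card
    rw [Finset.union_sdiff_of_subset (Finset.mem_powerset.mp hB)]
  rw [step1, ← reindexL D (fun B C => f B * (-1 : S) ^ (B ∪ C).card)]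
  have step2 : ∑ B ∈ D.powerset, ∑ C ∈ (D \ B).powerset, f B * (-1 : S) ^ (B ∪ C).card
      = ∑ B ∈ D.powerset, f B * (-1 : S) ^ B.card * 0 ^ (D \ B).card := by
    refine Finset.sum_congr rfl fun B hB => ?_
    have hinner : ∑ Ct ∈ (D \ B).powerset, (-1 : S) ^ (B ∪ Ct).card
        = (-1 : S) ^ B.card * ∑ Ct ∈ (D \ B).powerset, (-1 : S) ^ Ct.card := by
      rw [Finset.mul_sum]
      refine Finset.sum_congr rfl fun Ct hC => ?_
      have hdisj : Disjoint B Ct :=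
        Finset.disjoint_of_subset_right (Finset.mem_powerset.mp hC) Finset.disjoint_sdiff
      rw [Finset.card_union_of_disjoint hdisj, pow_add]
    rw [← Finset.mul_sum, hinner, sum_neg_one_pow', ← mul_assoc]
  rw [step2]
  rw [Finset.sum_eq_single D]
  · simp
  · intro B hB hBD
    have hsub : B ⊆ D := Finset.mem_powerset.mp hB
    have : (D \ B).card ≠ 0 := by
      rw [Finset.card_ne_zero, Finset.sdiff_nonempty]
      intro h
      exact hBD (Finset.Subset.antisymm hsub h)
    rw [zero_pow this, mul_zero]
  · intro h
    exact absurd (Finset.mem_powerset_self D) h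

/-- The master convolution identity. -/
lemma masterConv (E : Finset α) (u v : Finset α → S) :
    ∑ A ∈ E.powerset, (∑ B ∈ A.powerset, u B) *
        (∑ Ct ∈ (E \ A).powerset, v (A ∪ Ct) * (-1 : S) ^ Ct.card)
      = ∑ D ∈ E.powerset, u D * v D := by
  have step1 : ∀ A, (∑ B ∈ A.powerset, u B) *
        (∑ Ct ∈ (E \ A).powerset, v (A ∪ Ct) * (-1 : S) ^ Ct.card)
      = ∑ Ct ∈ (E \ A).powerset,
          (fun A Ct => (∑ B ∈ A.powerset, u B) * (v (A ∪ Ct) * (-1 : S) ^ Ct.card)) A Ct := by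
    intro A; rw [Finset.mul_sum]
  rw [Finset.sum_congr rfl fun A _ => step1 A,
    reindexL E (fun A Ct => (∑ B ∈ A.powerset, u B) * (v (A ∪ Ct) * (-1 : S) ^ Ct.card))]
  refine Finset.sum_congr rfl fun D hD => ?_
  have step2 : ∑ A ∈ D.powerset,
      (∑ B ∈ A.powerset, u B) * (v (A ∪ (D \ A)) * (-1 : S) ^ (D \ A).card)
      = (∑ A ∈ D.powerset, (∑ B ∈ A.powerset, u B) * (-1 : S) ^ A.card)
          * (v D * (-1 : S) ^ D.card) := by
    rw [Finset.sum_mul]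
    refine Finset.sum_congr rfl fun A hA => ?_
    have hsub : A ⊆ D := Finset.mem_powerset.mp hA
    rw [Finset.union_sdiff_of_subset hsub, Finset.card_sdiff_of_subset hsub,
      neg_one_pow_sub' (Finset.card_le_card hsub)]
    ring
  rw [step2, keyK D u]
  calc u D * (-1 : S) ^ D.card * (v D * (-1 : S) ^ D.card)
      = u D * v D * ((-1 : S) ^ D.card * (-1 : S) ^ D.card) := by ring
    _ = u D * v D := by rw [neg_one_pow_mul_self', mul_one]

end helpers

section convgen
variable {α : Type*} [DecidableEq α] {S : Type*} [CommRing S]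

/-- The generic Backman–Lenz convolution computation. -/
lemma conv_general (E : Finset α) (r : Finset α → ℕ)
    (hcard : ∀ X, X ⊆ E → r X ≤ X.card)
    (hmono : ∀ X Y, X ⊆ Y → Y ⊆ E → r X ≤ r Y)
    (hsubm : ∀ X Y, X ⊆ E → Y ⊆ E → r (X ∪ Y) + r (X ∩ Y) ≤ r X + r Y)
    (f g : Finset α → S) (x y : S) :
    ∑ A ∈ E.powerset,
      (∑ B ∈ A.powerset, f B * (0 - 1) ^ (r A - r B) * (y - 1) ^ (B.card - r B)) *
      (∑ Ct ∈ (E \ A).powerset,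
        g (Ct ∪ A) * (x - 1) ^ ((r (E \ A ∪ A) - r A) - (r (Ct ∪ A) - r A)) *
          (0 - 1) ^ (Ct.card - (r (Ct ∪ A) - r A)))
    = ∑ D ∈ E.powerset, f D * g D * (x - 1) ^ (r E - r D) * (y - 1) ^ (D.card - r D) := by
  have key := masterConv E (fun B => f B * (y - 1) ^ (B.card - r B) * (-1 : S) ^ (r B))
      (fun D => g D * (x - 1) ^ (r E - r D) * (-1 : S) ^ (r D))
  calc ∑ A ∈ E.powerset,
      (∑ B ∈ A.powerset, f B * (0 - 1) ^ (r A - r B) * (y - 1) ^ (B.card - r B)) *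
      (∑ Ct ∈ (E \ A).powerset,
        g (Ct ∪ A) * (x - 1) ^ ((r (E \ A ∪ A) - r A) - (r (Ct ∪ A) - r A)) *
          (0 - 1) ^ (Ct.card - (r (Ct ∪ A) - r A)))
      = ∑ A ∈ E.powerset,
        (∑ B ∈ A.powerset, f B * (y - 1) ^ (B.card - r B) * (-1 : S) ^ (r B)) *
        (∑ Ct ∈ (E \ A).powerset,
          (g (A ∪ Ct) * (x - 1) ^ (r E - r (A ∪ Ct)) * (-1 : S) ^ (r (A ∪ Ct)))
            * (-1 : S) ^ Ct.card) := ?_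
    _ = ∑ D ∈ E.powerset,
        (f D * (y - 1) ^ (D.card - r D) * (-1 : S) ^ (r D)) *
        (g D * (x - 1) ^ (r E - r D) * (-1 : S) ^ (r D)) := key
    _ = ∑ D ∈ E.powerset, f D * g D * (x - 1) ^ (r E - r D) * (y - 1) ^ (D.card - r D) := ?_
  · refine Finset.sum_congr rfl fun A hA => ?_
    have hAE : A ⊆ E := Finset.mem_powerset.mp hA
    have e1 : (∑ B ∈ A.powerset, f B * (0 - 1 : S) ^ (r A - r B) * (y - 1) ^ (B.card - r B))
        = (-1 : S) ^ (r A) *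
          ∑ B ∈ A.powerset, f B * (y - 1) ^ (B.card - r B) * (-1 : S) ^ (r B) := by
      rw [Finset.mul_sum]
      refine Finset.sum_congr rfl fun B hB => ?_
      have hrB : r B ≤ r A := hmono B A (Finset.mem_powerset.mp hB) hAE
      rw [zero_sub, neg_one_pow_sub' (S := S) hrB]
      ring
    have e2 : (∑ Ct ∈ (E \ A).powerset,
          g (Ct ∪ A) * (x - 1 : S) ^ ((r (E \ A ∪ A) - r A) - (r (Ct ∪ A) - r A)) *
            (0 - 1) ^ (Ct.card - (r (Ct ∪ A) - r A)))
        = (-1 : S) ^ (r A) *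
          ∑ Ct ∈ (E \ A).powerset,
            (g (A ∪ Ct) * (x - 1) ^ (r E - r (A ∪ Ct)) * (-1 : S) ^ (r (A ∪ Ct)))
              * (-1 : S) ^ Ct.card := by
      rw [Finset.mul_sum]
      refine Finset.sum_congr rfl fun Ct hCt => ?_
      have hCtE' : Ct ⊆ E := (Finset.mem_powerset.mp hCt).trans Finset.sdiff_subset
      have hCA : Ct ∪ A ⊆ E := Finset.union_subset hCtE' hAE
      have h1 : r A ≤ r (Ct ∪ A) := hmono A (Ct ∪ A) Finset.subset_union_right hCA
      have h2 : r (Ct ∪ A) ≤ r E := hmono (Ct ∪ A) E hCA Finset.Subset.rfl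
      have h3 : r (Ct ∪ A) - r A ≤ Ct.card := by
        have hs := hsubm Ct A hCtE' hAE
        have hc := hcard Ct hCtE'
        omega
      have hexp : (r E - r A) - (r (Ct ∪ A) - r A) = r E - r (Ct ∪ A) := by omega
      rw [Finset.sdiff_union_of_subset hAE, hexp, zero_sub,
        neg_one_pow_sub' (S := S) h3, neg_one_pow_sub' (S := S) h1, union_comm A Ct]
      ring
    rw [e1, e2]
    calc ((-1 : S) ^ r A * ∑ B ∈ A.powerset, f B * (y - 1) ^ (B.card - r B) * (-1 : S) ^ r B) *
          ((-1 : S) ^ r A * ∑ Ct ∈ (E \ A).powerset,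
            (g (A ∪ Ct) * (x - 1) ^ (r E - r (A ∪ Ct)) * (-1 : S) ^ (r (A ∪ Ct)))
              * (-1 : S) ^ Ct.card)
        = ((-1 : S) ^ r A * (-1 : S) ^ r A) *
          ((∑ B ∈ A.powerset, f B * (y - 1) ^ (B.card - r B) * (-1 : S) ^ r B) *
          (∑ Ct ∈ (E \ A).powerset,
            (g (A ∪ Ct) * (x - 1) ^ (r E - r (A ∪ Ct)) * (-1 : S) ^ (r (A ∪ Ct)))
              * (-1 : S) ^ Ct.card)) := by ring
      _ = _ := by rw [neg_one_pow_mul_self', one_mul]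
  · refine Finset.sum_congr rfl fun D hD => ?_
    calc (f D * (y - 1) ^ (D.card - r D) * (-1 : S) ^ (r D)) *
          (g D * (x - 1) ^ (r E - r D) * (-1 : S) ^ (r D))
        = f D * g D * (x - 1) ^ (r E - r D) * (y - 1) ^ (D.card - r D) *
            ((-1 : S) ^ (r D) * (-1 : S) ^ (r D)) := by ring
      _ = _ := by rw [neg_one_pow_mul_self', mul_one]

end convgen

open MvPolynomial in
/-- The Backman–Lenz convolution formulas for the arithmetic Tutte polynomial,
as identities of polynomials in `x = X 0` and `y = X 1`. -/
theorem arithTutte_backman_lenz {α : Type*} [DecidableEq α] {R : Type*} [CommRing R]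
    (M : PreMatroid α) (hM : M.IsMatroid) (m : Finset α → R) :
    (arithTutte M (fun A => (C (m A) : MvPolynomial (Fin 2) R)) (X 0) (X 1) =
      ∑ A ∈ M.E.powerset,
        arithTutte (M.restrict A) (fun B => (C (m B) : MvPolynomial (Fin 2) R)) 0 (X 1) *
          (M.contract A).tutte (X 0 : MvPolynomial (Fin 2) R) 0) ∧
    (arithTutte M (fun A => (C (m A) : MvPolynomial (Fin 2) R)) (X 0) (X 1) =
      ∑ A ∈ M.E.powerset,
        (M.restrict A).tutte (0 : MvPolynomial (Fin 2) R) (X 1) *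
          arithTutte (M.contract A) (fun B => (C (m (B ∪ A)) : MvPolynomial (Fin 2) R))
            (X 0) 0) := by
  obtain ⟨hcard, hmono, hsubm⟩ := hM
  constructor
  · have h := conv_general (S := MvPolynomial (Fin 2) R) M.E M.rk hcard hmono hsubm
      (fun B => MvPolynomial.C (m B)) (fun _ => (1 : MvPolynomial (Fin 2) R)) (X 0) (X 1)
    refine Eq.trans (Eq.trans ?_ h.symm) ?_
    · unfold arithTutte rank
      exact Finset.sum_congr rfl fun D _ => by ring
    · refine Finset.sum_congr rfl fun A _ => ?_
      unfold arithTutte tutte rank restrict contract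
      simp only [one_mul]
  · have h := conv_general (S := MvPolynomial (Fin 2) R) M.E M.rk hcard hmono hsubm
      (fun _ => (1 : MvPolynomial (Fin 2) R)) (fun D => MvPolynomial.C (m D)) (X 0) (X 1)
    refine Eq.trans (Eq.trans ?_ h.symm) ?_
    · unfold arithTutte rank
      exact Finset.sum_congr rfl fun D _ => by ring
    · refine Finset.sum_congr rfl fun A _ => ?_
      unfold arithTutte tutte rank restrict contract
      simp only [one_mul]

end PreMatroid
end
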